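/- arXiv:2401.06501 — 11 statements merged into one kernel-verified Lean document; each statement's English description precedes it below -/
import Mathlib

section
/- Fix a, b₁, b₂, c₁, c₂ ∈ ℂ with c₁, c₂ not equal to any nonpositive integer, positive integers k₁, k₂, and x, y ∈ ℂ, and for nonnegative integers τ₁, τ₂ set F(τ₁,τ₂) = 𝓕₂⁽¹⁾(a,b₁,b₂;c₁,c₂;τ₁,τ₂,k₁,k₂,x,y). Let Θ_{t₁} and Θ_{t₂} denote the operators acting on the first, respectively second, discrete variable by (Θ_t f)(t) = t(f(t) − f(t−1)). Then for all integers t₁ ≥ k₁ + 2 and t₂ ≥ 1, [Θ_{t₁}((1/k₁)Θ_{t₁} + c₁ − 1)F](t₁,t₂) = k₁(−1)^{k₁}(−t₁)_{k₁}·x·[((1/k₁)Θ_{t₁} + (1/k₂)Θ_{t₂} + a)((1/k₁)Θ_{t₁} + b₁)F](t₁−k₁, t₂), where Pochhammer (−t₁)_{k₁} is taken at the unshifted value t₁. -/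
open Complex Finset

/-- Ascending Pochhammer symbol `(z)_j = z (z+1) ⋯ (z+j−1)`, with `(z)_0 = 1`. -/
noncomputable def poch (z : ℂ) (j : ℕ) : ℂ := (ascPochhammer ℂ j).eval z

/-- The first discrete Appell function `𝓕₂⁽¹⁾(a,b₁,b₂;c₁,c₂;t₁,t₂,k₁,k₂,x,y)`.
Since `(−t₁)_{m k₁} = 0` once `m k₁ > t₁` and `(−t₂)_{n k₂} = 0` once `n k₂ > t₂`
(for `k₁, k₂ ≥ 1`), the doubly infinite sum reduces to this finite sum. -/
noncomputable def F2one (a b₁ b₂ c₁ c₂ : ℂ) (t₁ t₂ k₁ k₂ : ℕ) (x y : ℂ) : ℂ :=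
  ∑ m ∈ Finset.range (t₁ + 1), ∑ n ∈ Finset.range (t₂ + 1),
    poch a (m + n) * poch b₁ m * poch b₂ n * (-1 : ℂ) ^ (m * k₁) * poch (-(t₁ : ℂ)) (m * k₁)
      * (-1 : ℂ) ^ (n * k₂) * poch (-(t₂ : ℂ)) (n * k₂) * x ^ m * y ^ n
    / (poch c₁ m * poch c₂ n * (Nat.factorial m : ℂ) * (Nat.factorial n : ℂ))

/-- `Θ` acting on the first discrete variable: `(Θ_{t₁} g)(t₁,t₂) = t₁ (g(t₁,t₂) − g(t₁−1,t₂))`. -/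
noncomputable def Th1 (g : ℕ → ℕ → ℂ) : ℕ → ℕ → ℂ :=
  fun t₁ t₂ => (t₁ : ℂ) * (g t₁ t₂ - g (t₁ - 1) t₂)

/-- `Θ` acting on the second discrete variable: `(Θ_{t₂} g)(t₁,t₂) = t₂ (g(t₁,t₂) − g(t₁,t₂−1))`. -/
noncomputable def Th2 (g : ℕ → ℕ → ℂ) : ℕ → ℕ → ℂ :=
  fun t₁ t₂ => (t₂ : ℂ) * (g t₁ t₂ - g t₁ (t₂ - 1))

/-!
Writing `t^{(j)}` for the falling factorial, `(-1)^j (-t)_j = t^{(j)}`, so `F` is a double series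
`∑ A(m,n) t₁^{(m k₁)} t₂^{(n k₂)}` with coefficients independent of `t₁, t₂`. Falling factorials
are eigenfunctions of `Θ`, `Θ t^{(j)} = j t^{(j)}`, so both sides of the difference equation are
series of the same shape with modified coefficients. Since `t^{(mk + k)} = t^{(k)} (t - k)^{(mk)}`,
the shift `t₁ ↦ t₁ - k₁` together with the factor `t₁^{(k₁)}` amounts to the index shift
`m ↦ m + 1`, and the equation reduces to the contiguity relation
`(m + 1)(c₁ + m) A(m+1,n) = x (a + m + n)(b₁ + m) A(m,n)`.
-/

lemma poch_succ (z : ℂ) (j : ℕ) : poch z (j + 1) = poch z j * (z + j) :=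
  ascPochhammer_succ_eval j z

lemma neg_one_pow_mul_poch_neg_natCast (t j : ℕ) :
    (-1 : ℂ) ^ j * poch (-(t : ℂ)) j = t.descFactorial j := by
  rw [poch, ascPochhammer_eval_neg_eq_descPochhammer, ← mul_assoc, ← mul_pow]
  simp [descPochhammer_eval_eq_descFactorial]

lemma natCast_mul_descFactorial_sub_pred (t j : ℕ) :
    (t : ℂ) * (t.descFactorial j - (t - 1).descFactorial j) = j * t.descFactorial j := by
  rcases t with _ | s
  · cases j <;> simp
  rw [Nat.add_sub_cancel]
  rcases le_or_gt j (s + 1) with h | h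
  · have key := congrArg (Nat.cast : ℕ → ℂ) (Nat.succ_descFactorial s j)
    push_cast [Nat.cast_sub h] at key ⊢
    linear_combination key
  · simp [Nat.descFactorial_of_lt h, Nat.descFactorial_of_lt (Nat.lt_of_succ_lt h)]

lemma descFactorial_succ_mul (t k m : ℕ) :
    t.descFactorial ((m + 1) * k) = t.descFactorial k * (t - k).descFactorial (m * k) := by
  rw [← Nat.descFactorial_mul_descFactorial (Nat.le_mul_of_pos_left k m.succ_pos), mul_comm,
    Nat.succ_mul, Nat.add_sub_cancel]

lemma descFactorial_mul_eq_zero {t m k : ℕ} (hk : 0 < k) (h : t < m) :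
    t.descFactorial (m * k) = 0 :=
  Nat.descFactorial_of_lt (h.trans_le (Nat.le_mul_of_pos_right m hk))

noncomputable def appellCoeff (a b₁ b₂ c₁ c₂ x y : ℂ) (m n : ℕ) : ℂ :=
  poch a (m + n) * poch b₁ m * poch b₂ n * x ^ m * y ^ n
    / (poch c₁ m * poch c₂ n * (m.factorial : ℂ) * (n.factorial : ℂ))

lemma appellCoeff_succ_left (a b₁ b₂ c₁ c₂ x y : ℂ) {m : ℕ} (hm : c₁ + m ≠ 0) (n : ℕ) :
    (m + 1) * (c₁ + m) * appellCoeff a b₁ b₂ c₁ c₂ x y (m + 1) n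
      = x * (a + m + n) * (b₁ + m) * appellCoeff a b₁ b₂ c₁ c₂ x y m n := by
  have ratio : appellCoeff a b₁ b₂ c₁ c₂ x y (m + 1) n = appellCoeff a b₁ b₂ c₁ c₂ x y m n
      * (x * (a + m + n) * (b₁ + m) / ((c₁ + m) * (m + 1))) := by
    rw [appellCoeff, appellCoeff, div_mul_div_comm, Nat.add_right_comm, poch_succ, poch_succ,
      poch_succ, Nat.factorial_succ]
    push_cast
    ring_nf
  rw [ratio]
  field_simp

section DescFactorialSeries

variable (k₁ k₂ : ℕ)

/-- For `k₁, k₂ > 0` the terms with `m > τ₁` or `n > τ₂` vanish, so the summation ranges may be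
enlarged at will. -/
noncomputable def descFactorialSeries (w : ℕ → ℕ → ℂ) (τ₁ τ₂ : ℕ) : ℂ :=
  ∑ m ∈ range (τ₁ + 1), ∑ n ∈ range (τ₂ + 1),
    w m n * τ₁.descFactorial (m * k₁) * τ₂.descFactorial (n * k₂)

variable {k₁ k₂}

lemma F2one_eq_descFactorialSeries (a b₁ b₂ c₁ c₂ x y : ℂ) (τ₁ τ₂ : ℕ) :
    F2one a b₁ b₂ c₁ c₂ τ₁ τ₂ k₁ k₂ x y
      = descFactorialSeries k₁ k₂ (appellCoeff a b₁ b₂ c₁ c₂ x y) τ₁ τ₂ := by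
  refine sum_congr rfl fun m _ => sum_congr rfl fun n _ => ?_
  rw [appellCoeff, ← neg_one_pow_mul_poch_neg_natCast, ← neg_one_pow_mul_poch_neg_natCast]
  ring

lemma descFactorialSeries_eq_sum_range_left (hk₁ : 0 < k₁) (w : ℕ → ℕ → ℂ) {τ₁ M : ℕ}
    (h : τ₁ < M) (τ₂ : ℕ) :
    descFactorialSeries k₁ k₂ w τ₁ τ₂ = ∑ m ∈ range M, ∑ n ∈ range (τ₂ + 1),
      w m n * τ₁.descFactorial (m * k₁) * τ₂.descFactorial (n * k₂) := by
  refine sum_subset (range_subset_range.2 h) fun m _ hm => sum_eq_zero fun n _ => ?_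
  rw [mem_range, not_lt] at hm
  simp [descFactorial_mul_eq_zero hk₁ hm]

lemma descFactorialSeries_eq_sum_range_right (hk₂ : 0 < k₂) (w : ℕ → ℕ → ℂ) (τ₁ : ℕ)
    {τ₂ N : ℕ} (h : τ₂ < N) :
    descFactorialSeries k₁ k₂ w τ₁ τ₂ = ∑ m ∈ range (τ₁ + 1), ∑ n ∈ range N,
      w m n * τ₁.descFactorial (m * k₁) * τ₂.descFactorial (n * k₂) := by
  refine sum_congr rfl fun m _ => sum_subset (range_subset_range.2 h) fun n _ hn => ?_
  rw [mem_range, not_lt] at hn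
  simp [descFactorial_mul_eq_zero hk₂ hn]

lemma descFactorialSeries_add (u v : ℕ → ℕ → ℂ) (τ₁ τ₂ : ℕ) :
    descFactorialSeries k₁ k₂ u τ₁ τ₂ + descFactorialSeries k₁ k₂ v τ₁ τ₂
      = descFactorialSeries k₁ k₂ (fun m n => u m n + v m n) τ₁ τ₂ := by
  simp only [descFactorialSeries, ← sum_add_distrib, add_mul]

lemma mul_descFactorialSeries (c : ℂ) (w : ℕ → ℕ → ℂ) (τ₁ τ₂ : ℕ) :
    c * descFactorialSeries k₁ k₂ w τ₁ τ₂
      = descFactorialSeries k₁ k₂ (fun m n => c * w m n) τ₁ τ₂ := by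
  simp only [descFactorialSeries, mul_sum, mul_assoc]

lemma Th1_descFactorialSeries (hk₁ : 0 < k₁) (w : ℕ → ℕ → ℂ) :
    Th1 (descFactorialSeries k₁ k₂ w)
      = descFactorialSeries k₁ k₂ (fun m n => (m * k₁ : ℂ) * w m n) := by
  funext t₁ t₂
  rw [Th1, descFactorialSeries_eq_sum_range_left hk₁ w ((t₁.sub_le 1).trans_lt t₁.lt_succ_self),
    descFactorialSeries, ← sum_sub_distrib, mul_sum]
  refine sum_congr rfl fun m _ => ?_
  rw [← sum_sub_distrib, mul_sum]
  refine sum_congr rfl fun n _ => ?_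
  have eigen := natCast_mul_descFactorial_sub_pred t₁ (m * k₁)
  push_cast at eigen
  linear_combination (w m n * t₂.descFactorial (n * k₂)) * eigen

lemma Th2_descFactorialSeries (hk₂ : 0 < k₂) (w : ℕ → ℕ → ℂ) :
    Th2 (descFactorialSeries k₁ k₂ w)
      = descFactorialSeries k₁ k₂ (fun m n => (n * k₂ : ℂ) * w m n) := by
  funext t₁ t₂
  rw [Th2, descFactorialSeries_eq_sum_range_right hk₂ w t₁ ((t₂.sub_le 1).trans_lt t₂.lt_succ_self),
    descFactorialSeries, ← sum_sub_distrib, mul_sum]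
  refine sum_congr rfl fun m _ => ?_
  rw [← sum_sub_distrib, mul_sum]
  refine sum_congr rfl fun n _ => ?_
  have eigen := natCast_mul_descFactorial_sub_pred t₂ (n * k₂)
  push_cast at eigen
  linear_combination (w m n * t₁.descFactorial (m * k₁)) * eigen

lemma descFactorialSeries_eq_descFactorial_mul_sub (hk₁ : 0 < k₁) {u v : ℕ → ℕ → ℂ}
    (hu : ∀ n, u 0 n = 0) (huv : ∀ m n, u (m + 1) n = v m n) (t₁ t₂ : ℕ) :
    descFactorialSeries k₁ k₂ u t₁ t₂
      = t₁.descFactorial k₁ * descFactorialSeries k₁ k₂ v (t₁ - k₁) t₂ := by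
  rw [descFactorialSeries_eq_sum_range_left hk₁ u (t₁.lt_succ_self.trans t₁.succ.lt_succ_self),
    descFactorialSeries_eq_sum_range_left hk₁ v ((t₁.sub_le k₁).trans_lt t₁.lt_succ_self),
    sum_range_succ', mul_sum]
  simp only [hu, zero_mul, sum_const_zero, add_zero]
  refine sum_congr rfl fun m _ => ?_
  rw [mul_sum]
  refine sum_congr rfl fun n _ => ?_
  rw [huv, descFactorial_succ_mul]
  push_cast
  ring

end DescFactorialSeries

theorem difference_equation_one_general (a b₁ b₂ c₁ c₂ x y : ℂ) (k₁ k₂ : ℕ)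
    (hk₁ : 0 < k₁) (hk₂ : 0 < k₂)
    (hc₁ : ∀ n : ℕ, c₁ ≠ -(n : ℂ))
    (F : ℕ → ℕ → ℂ)
    (hF : ∀ τ₁ τ₂ : ℕ, F τ₁ τ₂ = F2one a b₁ b₂ c₁ c₂ τ₁ τ₂ k₁ k₂ x y)
    (t₁ t₂ : ℕ) :
    Th1 (fun σ₁ σ₂ => (1 / (k₁ : ℂ)) * Th1 F σ₁ σ₂ + (c₁ - 1) * F σ₁ σ₂) t₁ t₂ =
      (k₁ : ℂ) * (-1 : ℂ) ^ k₁ * poch (-(t₁ : ℂ)) k₁ * x *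
        ((1 / (k₁ : ℂ)) *
            Th1 (fun σ₁ σ₂ => (1 / (k₁ : ℂ)) * Th1 F σ₁ σ₂ + b₁ * F σ₁ σ₂) (t₁ - k₁) t₂ +
          (1 / (k₂ : ℂ)) *
            Th2 (fun σ₁ σ₂ => (1 / (k₁ : ℂ)) * Th1 F σ₁ σ₂ + b₁ * F σ₁ σ₂) (t₁ - k₁) t₂ +
          a * ((1 / (k₁ : ℂ)) * Th1 F (t₁ - k₁) t₂ + b₁ * F (t₁ - k₁) t₂)) := by
  set A := appellCoeff a b₁ b₂ c₁ c₂ x y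
  obtain rfl : F = descFactorialSeries k₁ k₂ A :=
    funext₂ fun τ₁ τ₂ => (hF τ₁ τ₂).trans (F2one_eq_descFactorialSeries a b₁ b₂ c₁ c₂ x y τ₁ τ₂)
  have hk₁' : (k₁ : ℂ) ≠ 0 := by exact_mod_cast hk₁.ne'
  have hk₂' : (k₂ : ℂ) ≠ 0 := by exact_mod_cast hk₂.ne'
  have one_div_Th1_add_mul (β : ℂ) :
      (fun σ₁ σ₂ => 1 / (k₁ : ℂ) * Th1 (descFactorialSeries k₁ k₂ A) σ₁ σ₂
          + β * descFactorialSeries k₁ k₂ A σ₁ σ₂)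
        = descFactorialSeries k₁ k₂ (fun m n => (m + β) * A m n) := by
    funext σ₁ σ₂
    simp only [Th1_descFactorialSeries hk₁, mul_descFactorialSeries, descFactorialSeries_add]
    congr 1
    funext m n
    field_simp
  rw [one_div_Th1_add_mul, one_div_Th1_add_mul, Th1_descFactorialSeries hk₁, mul_assoc (k₁ : ℂ),
    neg_one_pow_mul_poch_neg_natCast,
    descFactorialSeries_eq_descFactorial_mul_sub hk₁
      (v := fun m n => k₁ * x * ((m + n + a) * (m + b₁) * A m n)) (by simp)
      fun m n => ?_]
  · simp only [Th1_descFactorialSeries hk₁, Th2_descFactorialSeries hk₂, mul_descFactorialSeries,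
      descFactorialSeries_add]
    congr 1
    funext m n
    field_simp
  · push_cast
    linear_combination (k₁ : ℂ) * appellCoeff_succ_left a b₁ b₂ c₁ c₂ x y
      (fun h => hc₁ m (by linear_combination h)) n

/-- The first difference equation for `𝓕₂⁽¹⁾`:
`[Θ_{t₁}((1/k₁)Θ_{t₁} + c₁ − 1)F](t₁,t₂)
  = k₁(−1)^{k₁}(−t₁)_{k₁} x [((1/k₁)Θ_{t₁} + (1/k₂)Θ_{t₂} + a)((1/k₁)Θ_{t₁} + b₁)F](t₁−k₁,t₂)`,
for `t₁ ≥ k₁ + 2`, `t₂ ≥ 1`. -/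
theorem difference_equation_one (a b₁ b₂ c₁ c₂ x y : ℂ) (k₁ k₂ : ℕ)
    (hk₁ : 0 < k₁) (hk₂ : 0 < k₂)
    (hc₁ : ∀ n : ℕ, c₁ ≠ -(n : ℂ)) (hc₂ : ∀ n : ℕ, c₂ ≠ -(n : ℂ))
    (F : ℕ → ℕ → ℂ)
    (hF : ∀ τ₁ τ₂ : ℕ, F τ₁ τ₂ = F2one a b₁ b₂ c₁ c₂ τ₁ τ₂ k₁ k₂ x y)
    (t₁ t₂ : ℕ) (ht₁ : k₁ + 2 ≤ t₁) (ht₂ : 1 ≤ t₂) :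
    Th1 (fun σ₁ σ₂ => (1 / (k₁ : ℂ)) * Th1 F σ₁ σ₂ + (c₁ - 1) * F σ₁ σ₂) t₁ t₂ =
      (k₁ : ℂ) * (-1 : ℂ) ^ k₁ * poch (-(t₁ : ℂ)) k₁ * x *
        ((1 / (k₁ : ℂ)) *
            Th1 (fun σ₁ σ₂ => (1 / (k₁ : ℂ)) * Th1 F σ₁ σ₂ + b₁ * F σ₁ σ₂) (t₁ - k₁) t₂ +
          (1 / (k₂ : ℂ)) *
            Th2 (fun σ₁ σ₂ => (1 / (k₁ : ℂ)) * Th1 F σ₁ σ₂ + b₁ * F σ₁ σ₂) (t₁ - k₁) t₂ +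
          a * ((1 / (k₁ : ℂ)) * Th1 F (t₁ - k₁) t₂ + b₁ * F (t₁ - k₁) t₂)) :=
  difference_equation_one_general a b₁ b₂ c₁ c₂ x y k₁ k₂ hk₁ hk₂ hc₁ F hF t₁ t₂
end

section
/- Fix a, b₁, b₂, c₁, c₂ ∈ ℂ with c₁, c₂ not equal to any nonpositive integer, positive integers k₁, k₂, and x, y ∈ ℂ, and for nonnegative integers τ₁, τ₂ set F(τ₁,τ₂) = 𝓕₂⁽¹⁾(a,b₁,b₂;c₁,c₂;τ₁,τ₂,k₁,k₂,x,y). Let Θ_{t₁} and Θ_{t₂} denote the operators acting on the first, respectively second, discrete variable by (Θ_t f)(t) = t(f(t) − f(t−1)). Then for all integers t₁ ≥ 1 and t₂ ≥ k₂ + 2, [Θ_{t₂}((1/k₂)Θ_{t₂} + c₂ − 1)F](t₁,t₂) = k₂(−1)^{k₂}(−t₂)_{k₂}·y·[((1/k₁)Θ_{t₁} + (1/k₂)Θ_{t₂} + a)((1/k₂)Θ_{t₂} + b₂)F](t₁, t₂−k₂), where Pochhammer (−t₂)_{k₂} is taken at the unshifted value t₂. -/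
/-!
Each summand of `𝓕₂⁽¹⁾` factors as `(a)_{m+n} · u₁(t₁, m) · u₂(t₂, n)`, and since
`t ((-t)_j - (-(t-1))_j) = j (-t)_j`, it is an eigenfunction of `Θ_{t₁}` and `Θ_{t₂}` with
eigenvalues `m k₁` and `n k₂`. So every operator in the identity acts on the Appell sum by
multiplying its `(m, n)`-th term by a polynomial weight: `n k₂ (n + c₂ - 1)` on the left,
`(m + n + a)(n + b₂)` on the right. Shifting `n ↦ n + 1` then matches the two sides term by
term, because `(-t₂)_{(n+1) k₂} = (-t₂)_{k₂} (-(t₂ - k₂))_{n k₂}`.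
-/

open Complex Finset

lemma poch_succ_left (z : ℂ) (j : ℕ) : poch z (j + 1) = z * poch (z + 1) j := by
  simp [poch, ascPochhammer_succ_left, Polynomial.eval_comp]

lemma poch_add (z : ℂ) (i j : ℕ) : poch z (i + j) = poch z i * poch (z + i) j := by
  simp [poch, ← ascPochhammer_mul, Polynomial.eval_comp]

lemma poch_neg_natCast_of_lt {t j : ℕ} (h : t < j) : poch (-(t : ℂ)) j = 0 :=
  ascPochhammer_eval_neg_coe_nat_of_lt h

lemma neg_mul_poch_sub_poch_add_one (u : ℂ) (j : ℕ) :
    -u * (poch u j - poch (u + 1) j) = j * poch u j := by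
  cases j with
  | zero => simp [poch]
  | succ j =>
    rw [poch_succ_left, poch_succ (u + 1)]
    push_cast
    ring

lemma natCast_mul_poch_neg_sub_poch_neg_pred (τ j : ℕ) :
    (τ : ℂ) * (poch (-(τ : ℂ)) j - poch (-((τ - 1 : ℕ) : ℂ)) j) = j * poch (-(τ : ℂ)) j := by
  cases τ with
  | zero => cases j <;> simp [poch]
  | succ τ =>
    have h := neg_mul_poch_sub_poch_add_one (-((τ + 1 : ℕ) : ℂ)) j
    rw [neg_neg] at h
    rw [← h]
    push_cast
    ring_nf

noncomputable def appellFactor (b c : ℂ) (k : ℕ) (z : ℂ) (τ j : ℕ) : ℂ :=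
  poch b j * (-1 : ℂ) ^ (j * k) * poch (-(τ : ℂ)) (j * k) * z ^ j / (poch c j * (j.factorial : ℂ))

section appellFactor

variable {b c z : ℂ} {k : ℕ}

lemma appellFactor_eq_zero {τ j : ℕ} (h : τ < j * k) : appellFactor b c k z τ j = 0 := by
  simp [appellFactor, poch_neg_natCast_of_lt h]

lemma appellFactor_eq_zero_of_lt (hk : 0 < k) {τ j : ℕ} (h : τ < j) :
    appellFactor b c k z τ j = 0 :=
  appellFactor_eq_zero (h.trans_le (Nat.le_mul_of_pos_right j hk))

lemma natCast_mul_appellFactor_sub (τ j : ℕ) :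
    (τ : ℂ) * (appellFactor b c k z τ j - appellFactor b c k z (τ - 1) j)
      = ((j * k : ℕ) : ℂ) * appellFactor b c k z τ j := by
  have key := natCast_mul_poch_neg_sub_poch_neg_pred τ (j * k)
  simp only [appellFactor]
  linear_combination (poch b j * (-1 : ℂ) ^ (j * k) * z ^ j / (poch c j * (j.factorial : ℂ))) * key

lemma appellFactor_succ {j : ℕ} (hc : c + j ≠ 0) (τ : ℕ) :
    (j + 1) * (c + j) * appellFactor b c k z τ (j + 1)
      = (-1 : ℂ) ^ k * poch (-(τ : ℂ)) k * z * (b + j) * appellFactor b c k z (τ - k) j := by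
  rcases lt_or_ge τ k with hτ | hτ
  -- for `τ < k` the truncated `τ - k` is harmless: `(-τ)_k = 0` kills both sides
  · rw [poch_neg_natCast_of_lt hτ,
      appellFactor_eq_zero (hτ.trans_le (Nat.le_mul_of_pos_left k j.succ_pos))]
    simp
  · have hshift : poch (-(τ : ℂ)) ((j + 1) * k)
        = poch (-(τ : ℂ)) k * poch (-((τ - k : ℕ) : ℂ)) (j * k) := by
      rw [add_one_mul, add_comm, poch_add, Nat.cast_sub hτ, neg_sub, sub_eq_neg_add]
    simp only [appellFactor]
    rw [hshift, poch_succ, poch_succ, Nat.factorial_succ, add_one_mul j k, pow_add, pow_succ]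
    push_cast
    field_simp

end appellFactor

section weightedAppell

variable (a b₁ b₂ c₁ c₂ : ℂ) (k₁ k₂ : ℕ) (x y : ℂ)

noncomputable def appellTerm (τ₁ τ₂ m n : ℕ) : ℂ :=
  poch a (m + n) * appellFactor b₁ c₁ k₁ x τ₁ m * appellFactor b₂ c₂ k₂ y τ₂ n

noncomputable def weightedAppell (w : ℕ → ℕ → ℂ) (τ₁ τ₂ : ℕ) : ℂ :=
  ∑ m ∈ range (τ₁ + 1), ∑ n ∈ range (τ₂ + 1), w m n * appellTerm a b₁ b₂ c₁ c₂ k₁ k₂ x y τ₁ τ₂ m n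

local notation "W" => weightedAppell a b₁ b₂ c₁ c₂ k₁ k₂ x y
local notation "T" => appellTerm a b₁ b₂ c₁ c₂ k₁ k₂ x y

variable {a b₁ b₂ c₁ c₂ k₁ k₂ x y}

lemma F2one_eq_weightedAppell (τ₁ τ₂ : ℕ) :
    F2one a b₁ b₂ c₁ c₂ τ₁ τ₂ k₁ k₂ x y = W (fun _ _ => 1) τ₁ τ₂ := by
  refine sum_congr rfl fun m _ => sum_congr rfl fun n _ => ?_
  simp only [appellTerm, appellFactor]
  ring

lemma weightedAppell_eq_sum_range_left (hk₁ : 0 < k₁) (w : ℕ → ℕ → ℂ)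
    {τ₁ M : ℕ} (h : τ₁ < M) (τ₂ : ℕ) :
    W w τ₁ τ₂ = ∑ m ∈ range M, ∑ n ∈ range (τ₂ + 1), w m n * T τ₁ τ₂ m n := by
  refine sum_subset (range_subset_range.mpr h) fun m _ hm => sum_eq_zero fun n _ => ?_
  rw [appellTerm, appellFactor_eq_zero_of_lt hk₁ (by simp_all)]
  simp

lemma weightedAppell_eq_sum_range_right (hk₂ : 0 < k₂) (w : ℕ → ℕ → ℂ) (τ₁ : ℕ)
    {τ₂ N : ℕ} (h : τ₂ < N) :
    W w τ₁ τ₂ = ∑ m ∈ range (τ₁ + 1), ∑ n ∈ range N, w m n * T τ₁ τ₂ m n := by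
  refine sum_congr rfl fun m _ => sum_subset (range_subset_range.mpr h) fun n _ hn => ?_
  rw [appellTerm, appellFactor_eq_zero_of_lt hk₂ (by simp_all)]
  simp

lemma natCast_mul_appellTerm_sub_left (τ₁ τ₂ m n : ℕ) :
    (τ₁ : ℂ) * (T τ₁ τ₂ m n - T (τ₁ - 1) τ₂ m n) = ((m * k₁ : ℕ) : ℂ) * T τ₁ τ₂ m n := by
  simp only [appellTerm]
  linear_combination (poch a (m + n) * appellFactor b₂ c₂ k₂ y τ₂ n) *
    natCast_mul_appellFactor_sub (b := b₁) (c := c₁) (z := x) τ₁ m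

lemma natCast_mul_appellTerm_sub_right (τ₁ τ₂ m n : ℕ) :
    (τ₂ : ℂ) * (T τ₁ τ₂ m n - T τ₁ (τ₂ - 1) m n) = ((n * k₂ : ℕ) : ℂ) * T τ₁ τ₂ m n := by
  simp only [appellTerm]
  linear_combination (poch a (m + n) * appellFactor b₁ c₁ k₁ x τ₁ m) *
    natCast_mul_appellFactor_sub (b := b₂) (c := c₂) (z := y) τ₂ n

lemma Th1_weightedAppell (hk₁ : 0 < k₁) (w : ℕ → ℕ → ℂ) :
    Th1 (W w) = W (fun m n => ((m * k₁ : ℕ) : ℂ) * w m n) := by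
  funext τ₁ τ₂
  rw [Th1, weightedAppell_eq_sum_range_left hk₁ w (τ₁ := τ₁ - 1) (M := τ₁ + 1) (by omega) τ₂,
    weightedAppell, weightedAppell, ← sum_sub_distrib, mul_sum]
  refine sum_congr rfl fun m _ => ?_
  rw [← sum_sub_distrib, mul_sum]
  refine sum_congr rfl fun n _ => ?_
  rw [← mul_sub, mul_left_comm, natCast_mul_appellTerm_sub_left]
  ring

lemma Th2_weightedAppell (hk₂ : 0 < k₂) (w : ℕ → ℕ → ℂ) :
    Th2 (W w) = W (fun m n => ((n * k₂ : ℕ) : ℂ) * w m n) := by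
  funext τ₁ τ₂
  rw [Th2, weightedAppell_eq_sum_range_right hk₂ w τ₁ (τ₂ := τ₂ - 1) (N := τ₂ + 1) (by omega),
    weightedAppell, weightedAppell, ← sum_sub_distrib, mul_sum]
  refine sum_congr rfl fun m _ => ?_
  rw [← sum_sub_distrib, mul_sum]
  refine sum_congr rfl fun n _ => ?_
  rw [← mul_sub, mul_left_comm, natCast_mul_appellTerm_sub_right]
  ring

lemma mul_weightedAppell (p : ℂ) (w : ℕ → ℕ → ℂ) (τ₁ τ₂ : ℕ) :
    p * W w τ₁ τ₂ = W (fun m n => p * w m n) τ₁ τ₂ := by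
  simp only [weightedAppell, mul_sum, mul_assoc]

lemma weightedAppell_add (v w : ℕ → ℕ → ℂ) (τ₁ τ₂ : ℕ) :
    W v τ₁ τ₂ + W w τ₁ τ₂ = W (fun m n => v m n + w m n) τ₁ τ₂ := by
  simp only [weightedAppell, ← sum_add_distrib, add_mul]

lemma one_div_mul_Th2_add_mul_weightedAppell (hk₂ : 0 < k₂) (d : ℂ) (w : ℕ → ℕ → ℂ)
    (τ₁ τ₂ : ℕ) :
    1 / (k₂ : ℂ) * Th2 (W w) τ₁ τ₂ + d * W w τ₁ τ₂ = W (fun m n => (n + d) * w m n) τ₁ τ₂ := by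
  rw [Th2_weightedAppell hk₂]
  simp only [mul_weightedAppell, weightedAppell_add]
  congr 1
  funext m n
  have : (k₂ : ℂ) ≠ 0 := by exact_mod_cast hk₂.ne'
  push_cast
  field_simp

lemma one_div_mul_Th1_add_one_div_mul_Th2_add_mul_weightedAppell (hk₁ : 0 < k₁) (hk₂ : 0 < k₂)
    (e : ℂ) (w : ℕ → ℕ → ℂ) (τ₁ τ₂ : ℕ) :
    1 / (k₁ : ℂ) * Th1 (W w) τ₁ τ₂ + 1 / (k₂ : ℂ) * Th2 (W w) τ₁ τ₂ + e * W w τ₁ τ₂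
      = W (fun m n => (m + n + e) * w m n) τ₁ τ₂ := by
  rw [Th1_weightedAppell hk₁, Th2_weightedAppell hk₂]
  simp only [mul_weightedAppell, weightedAppell_add]
  congr 1
  funext m n
  have : (k₁ : ℂ) ≠ 0 := by exact_mod_cast hk₁.ne'
  have : (k₂ : ℂ) ≠ 0 := by exact_mod_cast hk₂.ne'
  push_cast
  field_simp

lemma weightedAppell_shift (hk₂ : 0 < k₂) (hc₂ : ∀ n : ℕ, c₂ ≠ -(n : ℂ)) (t₁ t₂ : ℕ) :
    W (fun _ n => ((n * k₂ : ℕ) : ℂ) * (n + (c₂ - 1))) t₁ t₂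
      = (k₂ : ℂ) * (-1 : ℂ) ^ k₂ * poch (-(t₂ : ℂ)) k₂ * y
        * W (fun m n => (m + n + a) * (n + b₂)) t₁ (t₂ - k₂) := by
  rw [weightedAppell_eq_sum_range_right hk₂ _ t₁ (N := t₂ + 2) (by omega),
    weightedAppell_eq_sum_range_right hk₂ _ t₁ (N := t₂ + 1) (by omega),
    mul_sum]
  refine sum_congr rfl fun m _ => ?_
  rw [sum_range_succ', mul_sum]
  simp only [zero_mul, Nat.cast_zero, add_zero]
  refine sum_congr rfl fun n _ => ?_
  have hc : c₂ + n ≠ 0 := fun h => hc₂ n (by linear_combination h)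
  simp only [appellTerm, ← add_assoc m n 1, poch_succ]
  push_cast
  linear_combination (k₂ * poch a (m + n) * (a + (m + n)) * appellFactor b₁ c₁ k₁ x t₁ m) *
    appellFactor_succ (b := b₂) (z := y) hc t₂

end weightedAppell

theorem difference_equation_two_general (a b₁ b₂ c₁ c₂ x y : ℂ) (k₁ k₂ : ℕ)
    (hk₁ : 0 < k₁) (hk₂ : 0 < k₂)
    (hc₂ : ∀ n : ℕ, c₂ ≠ -(n : ℂ))
    (F : ℕ → ℕ → ℂ)
    (hF : ∀ τ₁ τ₂ : ℕ, F τ₁ τ₂ = F2one a b₁ b₂ c₁ c₂ τ₁ τ₂ k₁ k₂ x y)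
    (t₁ t₂ : ℕ) :
    Th2 (fun σ₁ σ₂ => (1 / (k₂ : ℂ)) * Th2 F σ₁ σ₂ + (c₂ - 1) * F σ₁ σ₂) t₁ t₂ =
      (k₂ : ℂ) * (-1 : ℂ) ^ k₂ * poch (-(t₂ : ℂ)) k₂ * y *
        ((1 / (k₁ : ℂ)) *
            Th1 (fun σ₁ σ₂ => (1 / (k₂ : ℂ)) * Th2 F σ₁ σ₂ + b₂ * F σ₁ σ₂) t₁ (t₂ - k₂) +
          (1 / (k₂ : ℂ)) *
            Th2 (fun σ₁ σ₂ => (1 / (k₂ : ℂ)) * Th2 F σ₁ σ₂ + b₂ * F σ₁ σ₂) t₁ (t₂ - k₂) +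
          a * ((1 / (k₂ : ℂ)) * Th2 F t₁ (t₂ - k₂) + b₂ * F t₁ (t₂ - k₂))) := by
  obtain rfl : F = weightedAppell a b₁ b₂ c₁ c₂ k₁ k₂ x y (fun _ _ => 1) :=
    funext₂ fun τ₁ τ₂ => (hF τ₁ τ₂).trans (F2one_eq_weightedAppell τ₁ τ₂)
  simp only [one_div_mul_Th2_add_mul_weightedAppell hk₂]
  rw [Th2_weightedAppell hk₂,
    one_div_mul_Th1_add_one_div_mul_Th2_add_mul_weightedAppell hk₁ hk₂]
  simp only [mul_one]
  exact weightedAppell_shift hk₂ hc₂ t₁ t₂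

/-- The second difference equation for `𝓕₂⁽¹⁾`:
`[Θ_{t₂}((1/k₂)Θ_{t₂} + c₂ − 1)F](t₁,t₂)
  = k₂(−1)^{k₂}(−t₂)_{k₂} y [((1/k₁)Θ_{t₁} + (1/k₂)Θ_{t₂} + a)((1/k₂)Θ_{t₂} + b₂)F](t₁,t₂−k₂)`,
for `t₁ ≥ 1`, `t₂ ≥ k₂ + 2`. -/
theorem difference_equation_two (a b₁ b₂ c₁ c₂ x y : ℂ) (k₁ k₂ : ℕ)
    (hk₁ : 0 < k₁) (hk₂ : 0 < k₂)
    (hc₁ : ∀ n : ℕ, c₁ ≠ -(n : ℂ)) (hc₂ : ∀ n : ℕ, c₂ ≠ -(n : ℂ))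
    (F : ℕ → ℕ → ℂ)
    (hF : ∀ τ₁ τ₂ : ℕ, F τ₁ τ₂ = F2one a b₁ b₂ c₁ c₂ τ₁ τ₂ k₁ k₂ x y)
    (t₁ t₂ : ℕ) (ht₁ : 1 ≤ t₁) (ht₂ : k₂ + 2 ≤ t₂) :
    Th2 (fun σ₁ σ₂ => (1 / (k₂ : ℂ)) * Th2 F σ₁ σ₂ + (c₂ - 1) * F σ₁ σ₂) t₁ t₂ =
      (k₂ : ℂ) * (-1 : ℂ) ^ k₂ * poch (-(t₂ : ℂ)) k₂ * y *
        ((1 / (k₁ : ℂ)) *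
            Th1 (fun σ₁ σ₂ => (1 / (k₂ : ℂ)) * Th2 F σ₁ σ₂ + b₂ * F σ₁ σ₂) t₁ (t₂ - k₂) +
          (1 / (k₂ : ℂ)) *
            Th2 (fun σ₁ σ₂ => (1 / (k₂ : ℂ)) * Th2 F σ₁ σ₂ + b₂ * F σ₁ σ₂) t₁ (t₂ - k₂) +
          a * ((1 / (k₂ : ℂ)) * Th2 F t₁ (t₂ - k₂) + b₂ * F t₁ (t₂ - k₂))) :=
  difference_equation_two_general a b₁ b₂ c₁ c₂ x y k₁ k₂ hk₁ hk₂ hc₂ F hF t₁ t₂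
end

section
/- Assume 0 < Re b₁, 0 < Re(c₁ − b₁), 0 < Re b₂ and 0 < Re(c₂ − b₂). Define G(X,Y) = Σ_{m,n≥0} (a)_{m+n} (−1)^{m k₁} (−t₁)_{m k₁} (−1)^{n k₂} (−t₂)_{n k₂} X^m Y^n / (m! n!) (a finite sum). Then 𝓕₂⁽¹⁾(a,b₁,b₂;c₁,c₂;t₁,t₂,k₁,k₂,x,y) = [Γ(c₁)Γ(c₂)/(Γ(b₁)Γ(b₂)Γ(c₁−b₁)Γ(c₂−b₂))] · ∫₀¹∫₀¹ u^{b₁−1}(1−u)^{c₁−b₁−1} v^{b₂−1}(1−v)^{c₂−b₂−1} G(u·x, v·y) du dv, where the complex powers of u, 1−u, v, 1−v are defined via the real logarithm on (0,1). -/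
open Complex Finset

lemma Gamma_poch (z : ℂ) (hz : ∀ n : ℕ, z ≠ -(n : ℂ)) (m : ℕ) :
    Complex.Gamma (z + m) = poch z m * Complex.Gamma z := by
  induction m with
  | zero => simp [poch]
  | succ m ih =>
    have hzm : z + m ≠ 0 := by
      intro h
      exact hz m (by linear_combination h)
    have : z + (m + 1 : ℕ) = (z + m) + 1 := by push_cast; ring
    rw [this, Complex.Gamma_add_one _ hzm, ih]
    simp only [poch, ascPochhammer_succ_eval]
    ring

lemma beta_integrable (b c : ℂ) (hb : 0 < b.re) (hcb : 0 < (c - b).re) (m : ℕ) :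
    IntervalIntegrable
      (fun u : ℝ => (u : ℂ) ^ (b - 1) * ((1 : ℂ) - (u : ℂ)) ^ (c - b - 1) * (u : ℂ) ^ m)
      MeasureTheory.volume 0 1 :=
  (Complex.betaIntegral_convergent hb hcb).mul_continuousOn
    ((Complex.continuous_ofReal.pow m).continuousOn)

lemma beta_value (b c : ℂ) (hb : 0 < b.re) (hcb : 0 < (c - b).re)
    (hc : ∀ n : ℕ, c ≠ -(n : ℂ)) (m : ℕ) :
    (∫ u in (0 : ℝ)..1, (u : ℂ) ^ (b - 1) * ((1 : ℂ) - (u : ℂ)) ^ (c - b - 1) * (u : ℂ) ^ m)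
      = Complex.Gamma (b + m) * Complex.Gamma (c - b) / Complex.Gamma (c + m) := by
  have hbm : 0 < (b + (m : ℂ)).re := by
    simp only [Complex.add_re, Complex.natCast_re]
    positivity
  have hEq : Set.EqOn
      (fun u : ℝ => (u : ℂ) ^ (b - 1) * ((1 : ℂ) - (u : ℂ)) ^ (c - b - 1) * (u : ℂ) ^ m)
      (fun u : ℝ => (u : ℂ) ^ (b + m - 1) * ((1 : ℂ) - (u : ℂ)) ^ (c - b - 1))
      (Set.uIcc (0 : ℝ) 1) := by
    intro u _
    by_cases hu : (u : ℂ) = 0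
    · rcases Nat.eq_zero_or_pos m with hm | hm
      · simp [hm]
      · have h1 : b + m - 1 ≠ 0 := by
          intro h
          have := congrArg Complex.re h
          simp only [Complex.sub_re, Complex.add_re, Complex.natCast_re, Complex.one_re,
            Complex.zero_re] at this
          have : b.re = 1 - m := by linarith
          rw [this] at hb
          have : (1 : ℝ) ≤ (m : ℝ) := by exact_mod_cast hm
          linarith
        have h2 : b - 1 ≠ 0 ∨ (0:ℂ) ^ m = 0 := Or.inr (by simp [hu, Nat.pos_iff_ne_zero.mp hm])
        simp only [hu, Complex.zero_cpow h1, zero_mul, mul_zero]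
        rcases h2 with h2 | h2
        · simp [hu, zero_pow (Nat.pos_iff_ne_zero.mp hm)]
        · simp [hu, h2]
    · simp only
      rw [mul_right_comm, ← Complex.cpow_natCast (u : ℂ) m, ← Complex.cpow_add _ _ hu]
      ring_nf
  rw [intervalIntegral.integral_congr hEq]
  have hB := Complex.Gamma_mul_Gamma_eq_betaIntegral hbm hcb
  have hsum : b + (m : ℂ) + (c - b) = c + m := by ring
  rw [hsum] at hB
  unfold Complex.betaIntegral at hB
  have hC : Complex.Gamma (c + m) ≠ 0 := by
    refine Complex.Gamma_ne_zero fun n h => hc (n + m) ?_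
    push_cast
    linear_combination h
  rw [eq_div_iff hC]
  linear_combination -hB

/-- Euler-type double integral representation of `𝓕₂⁽¹⁾` (Theorem 2.1 of the paper). -/
theorem integral_representation_euler (a b₁ b₂ c₁ c₂ x y : ℂ) (k₁ k₂ : ℕ)
    (hk₁ : 0 < k₁) (hk₂ : 0 < k₂)
    (hc₁ : ∀ n : ℕ, c₁ ≠ -(n : ℂ)) (hc₂ : ∀ n : ℕ, c₂ ≠ -(n : ℂ))
    (t₁ t₂ : ℕ)
    (hb₁ : 0 < b₁.re) (hc₁b₁ : 0 < (c₁ - b₁).re) (hb₂ : 0 < b₂.re) (hc₂b₂ : 0 < (c₂ - b₂).re)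
    (G : ℂ → ℂ → ℂ)
    (hG : ∀ X Y : ℂ, G X Y =
      ∑ m ∈ Finset.range (t₁ + 1), ∑ n ∈ Finset.range (t₂ + 1),
        poch a (m + n) * (-1 : ℂ) ^ (m * k₁) * poch (-(t₁ : ℂ)) (m * k₁)
          * (-1 : ℂ) ^ (n * k₂) * poch (-(t₂ : ℂ)) (n * k₂) * X ^ m * Y ^ n
        / ((Nat.factorial m : ℂ) * (Nat.factorial n : ℂ))) :
    F2one a b₁ b₂ c₁ c₂ t₁ t₂ k₁ k₂ x y =
      Complex.Gamma c₁ * Complex.Gamma c₂ /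
          (Complex.Gamma b₁ * Complex.Gamma b₂ * Complex.Gamma (c₁ - b₁) *
            Complex.Gamma (c₂ - b₂)) *
        ∫ u in (0 : ℝ)..1, ∫ v in (0 : ℝ)..1,
          (u : ℂ) ^ (b₁ - 1) * ((1 : ℂ) - (u : ℂ)) ^ (c₁ - b₁ - 1) *
            (v : ℂ) ^ (b₂ - 1) * ((1 : ℂ) - (v : ℂ)) ^ (c₂ - b₂ - 1) *
            G ((u : ℂ) * x) ((v : ℂ) * y) := by
  -- abbreviations
  set C : ℕ → ℕ → ℂ := fun m n =>
    poch a (m + n) * (-1 : ℂ) ^ (m * k₁) * poch (-(t₁ : ℂ)) (m * k₁)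
      * (-1 : ℂ) ^ (n * k₂) * poch (-(t₂ : ℂ)) (n * k₂) * x ^ m * y ^ n
      / ((Nat.factorial m : ℂ) * (Nat.factorial n : ℂ)) with hC
  set U : ℝ → ℕ → ℂ := fun u m =>
    (u : ℂ) ^ (b₁ - 1) * ((1 : ℂ) - (u : ℂ)) ^ (c₁ - b₁ - 1) * (u : ℂ) ^ m with hU
  set V : ℝ → ℕ → ℂ := fun v n =>
    (v : ℂ) ^ (b₂ - 1) * ((1 : ℂ) - (v : ℂ)) ^ (c₂ - b₂ - 1) * (v : ℂ) ^ n with hV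
  -- pointwise expansion of the integrand
  have hpt : ∀ u v : ℝ,
      (u : ℂ) ^ (b₁ - 1) * ((1 : ℂ) - (u : ℂ)) ^ (c₁ - b₁ - 1) *
        (v : ℂ) ^ (b₂ - 1) * ((1 : ℂ) - (v : ℂ)) ^ (c₂ - b₂ - 1) *
        G ((u : ℂ) * x) ((v : ℂ) * y)
      = ∑ m ∈ Finset.range (t₁ + 1), ∑ n ∈ Finset.range (t₂ + 1),
          (C m n * U u m) * V v n := by
    intro u v
    rw [hG, Finset.mul_sum]
    refine Finset.sum_congr rfl fun m _ => ?_
    rw [Finset.mul_sum]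
    refine Finset.sum_congr rfl fun n _ => ?_
    simp only [hC, hU, hV]
    ring
  -- step 1: the double integral equals a double sum of products of beta integrals
  have hVint : ∀ n : ℕ, IntervalIntegrable (fun v : ℝ => V v n) MeasureTheory.volume 0 1 :=
    fun n => beta_integrable b₂ c₂ hb₂ hc₂b₂ n
  have hUint : ∀ m : ℕ, IntervalIntegrable (fun u : ℝ => U u m) MeasureTheory.volume 0 1 :=
    fun m => beta_integrable b₁ c₁ hb₁ hc₁b₁ m
  have hinner : ∀ u : ℝ,
      (∫ v in (0 : ℝ)..1,
        (u : ℂ) ^ (b₁ - 1) * ((1 : ℂ) - (u : ℂ)) ^ (c₁ - b₁ - 1) *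
          (v : ℂ) ^ (b₂ - 1) * ((1 : ℂ) - (v : ℂ)) ^ (c₂ - b₂ - 1) *
          G ((u : ℂ) * x) ((v : ℂ) * y))
      = ∑ m ∈ Finset.range (t₁ + 1), ∑ n ∈ Finset.range (t₂ + 1),
          (C m n * U u m) * (∫ v in (0 : ℝ)..1, V v n) := by
    intro u
    simp only [hpt u]
    rw [intervalIntegral.integral_finset_sum]
    · refine Finset.sum_congr rfl fun m _ => ?_
      rw [intervalIntegral.integral_finset_sum]
      · exact Finset.sum_congr rfl fun n _ =>
          intervalIntegral.integral_const_mul (C m n * U u m) (fun v => V v n)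
      · exact fun n _ => (hVint n).const_mul _
    · intro m _
      have : (fun v : ℝ => ∑ n ∈ Finset.range (t₂ + 1), (C m n * U u m) * V v n)
          = ∑ n ∈ Finset.range (t₂ + 1), fun v : ℝ => (C m n * U u m) * V v n := by
        funext v; simp
      rw [this]
      exact IntervalIntegrable.sum _ fun n _ => (hVint n).const_mul _
  have houter :
      (∫ u in (0 : ℝ)..1, ∫ v in (0 : ℝ)..1,
        (u : ℂ) ^ (b₁ - 1) * ((1 : ℂ) - (u : ℂ)) ^ (c₁ - b₁ - 1) *
          (v : ℂ) ^ (b₂ - 1) * ((1 : ℂ) - (v : ℂ)) ^ (c₂ - b₂ - 1) *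
          G ((u : ℂ) * x) ((v : ℂ) * y))
      = ∑ m ∈ Finset.range (t₁ + 1), ∑ n ∈ Finset.range (t₂ + 1),
          C m n * (∫ u in (0 : ℝ)..1, U u m) * (∫ v in (0 : ℝ)..1, V v n) := by
    rw [intervalIntegral.integral_congr (fun u _ => hinner u)]
    rw [intervalIntegral.integral_finset_sum]
    · refine Finset.sum_congr rfl fun m _ => ?_
      rw [intervalIntegral.integral_finset_sum]
      · refine Finset.sum_congr rfl fun n _ => ?_
        rw [intervalIntegral.integral_mul_const, intervalIntegral.integral_const_mul]
      · exact fun n _ => ((hUint m).const_mul _).mul_const _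
    · intro m _
      have : (fun u : ℝ => ∑ n ∈ Finset.range (t₂ + 1),
            (C m n * U u m) * (∫ v in (0 : ℝ)..1, V v n))
          = ∑ n ∈ Finset.range (t₂ + 1),
              fun u : ℝ => (C m n * U u m) * (∫ v in (0 : ℝ)..1, V v n) := by
        funext u; simp
      rw [this]
      exact IntervalIntegrable.sum _ fun n _ => ((hUint m).const_mul _).mul_const _
  rw [houter]
  -- step 2: evaluate the beta integrals and compare term by term
  have hb₁' : ∀ n : ℕ, b₁ ≠ -(n : ℂ) := by
    intro n h
    have := congrArg Complex.re h
    simp only [Complex.neg_re, Complex.natCast_re] at this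
    have : (0:ℝ) ≤ (n:ℝ) := Nat.cast_nonneg n
    rw [show b₁.re = -(n:ℝ) by exact_mod_cast ‹b₁.re = -(n:ℝ)›] at hb₁
    linarith
  have hb₂' : ∀ n : ℕ, b₂ ≠ -(n : ℂ) := by
    intro n h
    have := congrArg Complex.re h
    simp only [Complex.neg_re, Complex.natCast_re] at this
    have : (0:ℝ) ≤ (n:ℝ) := Nat.cast_nonneg n
    rw [show b₂.re = -(n:ℝ) by exact_mod_cast ‹b₂.re = -(n:ℝ)›] at hb₂
    linarith
  rw [Finset.mul_sum]
  unfold F2one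
  refine Finset.sum_congr rfl fun m hm => ?_
  rw [Finset.mul_sum]
  refine Finset.sum_congr rfl fun n hn => ?_
  rw [beta_value b₁ c₁ hb₁ hc₁b₁ hc₁ m, beta_value b₂ c₂ hb₂ hc₂b₂ hc₂ n]
  rw [Gamma_poch b₁ hb₁' m, Gamma_poch c₁ hc₁ m, Gamma_poch b₂ hb₂' n, Gamma_poch c₂ hc₂ n]
  have hGb₁ : Complex.Gamma b₁ ≠ 0 := Complex.Gamma_ne_zero_of_re_pos hb₁
  have hGb₂ : Complex.Gamma b₂ ≠ 0 := Complex.Gamma_ne_zero_of_re_pos hb₂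
  have hGc₁b₁ : Complex.Gamma (c₁ - b₁) ≠ 0 := Complex.Gamma_ne_zero_of_re_pos hc₁b₁
  have hGc₂b₂ : Complex.Gamma (c₂ - b₂) ≠ 0 := Complex.Gamma_ne_zero_of_re_pos hc₂b₂
  have hGc₁ : Complex.Gamma c₁ ≠ 0 := Complex.Gamma_ne_zero hc₁
  have hGc₂ : Complex.Gamma c₂ ≠ 0 := Complex.Gamma_ne_zero hc₂
  have hpc₁ : poch c₁ m ≠ 0 := by
    intro h
    have := Gamma_poch c₁ hc₁ m
    rw [h, zero_mul] at this
    exact Complex.Gamma_ne_zero (fun j hj => hc₁ (j + m) (by push_cast; linear_combination hj)) this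
  have hpc₂ : poch c₂ n ≠ 0 := by
    intro h
    have := Gamma_poch c₂ hc₂ n
    rw [h, zero_mul] at this
    exact Complex.Gamma_ne_zero (fun j hj => hc₂ (j + n) (by push_cast; linear_combination hj)) this
  have hfm : (Nat.factorial m : ℂ) ≠ 0 := Nat.cast_ne_zero.mpr (Nat.factorial_ne_zero m)
  have hfn : (Nat.factorial n : ℂ) ≠ 0 := Nat.cast_ne_zero.mpr (Nat.factorial_ne_zero n)
  simp only [hC]
  simp only [div_mul_div_comm]
  rw [div_eq_div_iff
    (mul_ne_zero (mul_ne_zero (mul_ne_zero hpc₁ hpc₂) hfm) hfn)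
    (by simp [hGb₁, hGb₂, hGc₁b₁, hGc₂b₂, hGc₁, hGc₂, hpc₁, hpc₂, hfm, hfn])]
  ring
end

section
/- Assume Re a > 0. Define H(X,Y) = Σ_{m,n≥0} (b₁)_m (b₂)_n (−1)^{m k₁} (−t₁)_{m k₁} (−1)^{n k₂} (−t₂)_{n k₂} X^m Y^n / ((c₁)_m (c₂)_n m! n!) (a finite sum). Then 𝓕₂⁽¹⁾(a,b₁,b₂;c₁,c₂;t₁,t₂,k₁,k₂,x,y) = (1/Γ(a)) · ∫₀^∞ e^{−u} u^{a−1} H(u·x, u·y) du, where u^{a−1} is defined via the real logarithm on (0,∞). -/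
/-! `H (u x, u y)` is a polynomial in `u` whose monomial `u ^ (m + n)` carries exactly the
coefficient of the `(m, n)` term of `𝓕₂⁽¹⁾` without `(a)_{m+n}`. Against `e^{-u} u^{a-1}` on
`(0, ∞)` that monomial integrates to `Γ(a + m + n) = (a)_{m+n} Γ(a)`. -/

open Complex Finset

open MeasureTheory

section GammaIntegral

open Set

variable {a : ℂ}

lemma poch_eq_Gamma_add_nat_div_Gamma_of_re_pos (ha : 0 < a.re) (j : ℕ) :
    poch a j = Gamma (a + j) / Gamma a := by
  refine (Gamma_add_nat_div_Gamma_eq a fun k hk => ?_).symm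
  have : a.re ≤ 0 := by simp [hk]
  linarith

lemma re_add_natCast_pos (ha : 0 < a.re) (j : ℕ) : 0 < (a + j).re := by
  simpa using ha.trans_le (le_add_of_nonneg_right j.cast_nonneg)

lemma gammaIntegrand_add_nat_eqOn (j : ℕ) :
    EqOn (fun u : ℝ => ((-u).exp : ℂ) * (u : ℂ) ^ (a + j - 1))
      (fun u : ℝ => exp (-(u : ℂ)) * (u : ℂ) ^ (a - 1) * (u : ℂ) ^ j) (Ioi 0) := by
  intro u hu
  have hu : (u : ℂ) ≠ 0 := ofReal_ne_zero.2 (ne_of_gt hu)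
  simp only [ofReal_exp, ofReal_neg]
  rw [add_sub_right_comm, cpow_add _ _ hu, cpow_natCast, mul_assoc]

lemma integrableOn_exp_neg_mul_cpow_mul_pow (ha : 0 < a.re) (j : ℕ) :
    IntegrableOn (fun u : ℝ => exp (-(u : ℂ)) * (u : ℂ) ^ (a - 1) * (u : ℂ) ^ j) (Ioi 0) :=
  (GammaIntegral_convergent (re_add_natCast_pos ha j)).congr_fun
    (gammaIntegrand_add_nat_eqOn j) measurableSet_Ioi

lemma integral_exp_neg_mul_cpow_mul_pow (ha : 0 < a.re) (j : ℕ) :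
    ∫ u in Ioi (0 : ℝ), exp (-(u : ℂ)) * (u : ℂ) ^ (a - 1) * (u : ℂ) ^ j = Gamma (a + j) := by
  rw [Gamma_eq_integral (re_add_natCast_pos ha j), GammaIntegral,
    setIntegral_congr_fun measurableSet_Ioi (gammaIntegrand_add_nat_eqOn j)]

lemma integral_exp_neg_mul_cpow_mul_sum {ι : Type*} (ha : 0 < a.re) (s : Finset ι)
    (c : ι → ℂ) (d : ι → ℕ) :
    ∫ u in Ioi (0 : ℝ), exp (-(u : ℂ)) * (u : ℂ) ^ (a - 1) * ∑ i ∈ s, c i * (u : ℂ) ^ d i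
      = ∑ i ∈ s, c i * Gamma (a + d i) := by
  simp_rw [mul_sum, mul_left_comm _ (c _)]
  rw [integral_finsetSum _ fun i _ =>
    (integrableOn_exp_neg_mul_cpow_mul_pow ha (d i)).const_mul (c i)]
  simp_rw [integral_const_mul, integral_exp_neg_mul_cpow_mul_pow ha]

end GammaIntegral

theorem integral_representation_laplace_a_general (a b₁ b₂ c₁ c₂ x y : ℂ) (k₁ k₂ : ℕ)
    (t₁ t₂ : ℕ) (ha : 0 < a.re)
    (H : ℂ → ℂ → ℂ)
    (hH : ∀ X Y : ℂ, H X Y =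
      ∑ m ∈ Finset.range (t₁ + 1), ∑ n ∈ Finset.range (t₂ + 1),
        poch b₁ m * poch b₂ n * (-1 : ℂ) ^ (m * k₁) * poch (-(t₁ : ℂ)) (m * k₁)
          * (-1 : ℂ) ^ (n * k₂) * poch (-(t₂ : ℂ)) (n * k₂) * X ^ m * Y ^ n
        / (poch c₁ m * poch c₂ n * (Nat.factorial m : ℂ) * (Nat.factorial n : ℂ))) :
    F2one a b₁ b₂ c₁ c₂ t₁ t₂ k₁ k₂ x y =
      (1 / Complex.Gamma a) *
        ∫ u in Set.Ioi (0 : ℝ),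
          Complex.exp (-(u : ℂ)) * (u : ℂ) ^ (a - 1) * H ((u : ℂ) * x) ((u : ℂ) * y) := by
  let K : ℕ × ℕ → ℂ := fun p =>
    poch b₁ p.1 * poch b₂ p.2 * (-1 : ℂ) ^ (p.1 * k₁) * poch (-(t₁ : ℂ)) (p.1 * k₁)
      * (-1 : ℂ) ^ (p.2 * k₂) * poch (-(t₂ : ℂ)) (p.2 * k₂) * x ^ p.1 * y ^ p.2
      / (poch c₁ p.1 * poch c₂ p.2 * (Nat.factorial p.1 : ℂ) * (Nat.factorial p.2 : ℂ))
  have hH_expand (u : ℂ) :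
      H (u * x) (u * y) = ∑ p ∈ range (t₁ + 1) ×ˢ range (t₂ + 1), K p * u ^ (p.1 + p.2) := by
    rw [hH, sum_product]
    refine sum_congr rfl fun m _ => sum_congr rfl fun n _ => ?_
    simp only [K, mul_pow, pow_add]
    ring
  have hΓ := Gamma_ne_zero_of_re_pos ha
  simp_rw [hH_expand, integral_exp_neg_mul_cpow_mul_sum ha, F2one, ← sum_product', mul_sum]
  refine sum_congr rfl fun p _ => ?_
  rw [poch_eq_Gamma_add_nat_div_Gamma_of_re_pos ha, Nat.cast_add]
  field_simp
  ring

/-- Laplace-type integral representation of `𝓕₂⁽¹⁾` with respect to the parameter `a`. -/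
theorem integral_representation_laplace_a (a b₁ b₂ c₁ c₂ x y : ℂ) (k₁ k₂ : ℕ)
    (hk₁ : 0 < k₁) (hk₂ : 0 < k₂)
    (hc₁ : ∀ n : ℕ, c₁ ≠ -(n : ℂ)) (hc₂ : ∀ n : ℕ, c₂ ≠ -(n : ℂ))
    (t₁ t₂ : ℕ) (ha : 0 < a.re)
    (H : ℂ → ℂ → ℂ)
    (hH : ∀ X Y : ℂ, H X Y =
      ∑ m ∈ Finset.range (t₁ + 1), ∑ n ∈ Finset.range (t₂ + 1),
        poch b₁ m * poch b₂ n * (-1 : ℂ) ^ (m * k₁) * poch (-(t₁ : ℂ)) (m * k₁)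
          * (-1 : ℂ) ^ (n * k₂) * poch (-(t₂ : ℂ)) (n * k₂) * X ^ m * Y ^ n
        / (poch c₁ m * poch c₂ n * (Nat.factorial m : ℂ) * (Nat.factorial n : ℂ))) :
    F2one a b₁ b₂ c₁ c₂ t₁ t₂ k₁ k₂ x y =
      (1 / Complex.Gamma a) *
        ∫ u in Set.Ioi (0 : ℝ),
          Complex.exp (-(u : ℂ)) * (u : ℂ) ^ (a - 1) * H ((u : ℂ) * x) ((u : ℂ) * y) :=
  integral_representation_laplace_a_general a b₁ b₂ c₁ c₂ x y k₁ k₂ t₁ t₂ ha H hH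
end

section
/- Assume Re b₁ > 0. Define K(X,Y) = Σ_{m,n≥0} (a)_{m+n} (b₂)_n (−1)^{m k₁} (−t₁)_{m k₁} (−1)^{n k₂} (−t₂)_{n k₂} X^m Y^n / ((c₁)_m (c₂)_n m! n!) (a finite sum). Then 𝓕₂⁽¹⁾(a,b₁,b₂;c₁,c₂;t₁,t₂,k₁,k₂,x,y) = (1/Γ(b₁)) · ∫₀^∞ e^{−u} u^{b₁−1} K(u·x, y) du, where u^{b₁−1} is defined via the real logarithm on (0,∞). -/
open Complex Finset

open MeasureTheory

/-! Against the weight `e^{-u} u^{b-1}` on `(0, ∞)` the monomial `u^m` integrates to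
`Γ(b + m) = (b)_m Γ(b)`. Since `K(u x, y)` is a polynomial in `u` whose `m`-th coefficient is the
`m`-th row of `𝓕₂⁽¹⁾` without the factor `(b₁)_m`, integrating it term by term and dividing by
`Γ(b₁)` restores exactly these factors. -/

namespace Complex

open Set

lemma Gamma_add_nat_eq_poch_mul {s : ℂ} (hs : 0 < s.re) (m : ℕ) :
    Gamma (s + m) = poch s m * Gamma s := by
  have hs' : ∀ k : ℕ, s ≠ -k := by
    rintro k rfl
    simp only [neg_re, natCast_re, Left.neg_pos_iff] at hs
    exact (Nat.cast_nonneg k).not_gt hs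
  rw [poch, ← Gamma_add_nat_div_Gamma_eq s hs', div_mul_cancel₀ _ (Gamma_ne_zero_of_re_pos hs)]

lemma exp_neg_mul_cpow_mul_pow_eqOn (s : ℂ) (m : ℕ) :
    EqOn (fun u : ℝ => exp (-(u : ℂ)) * (u : ℂ) ^ (s - 1) * (u : ℂ) ^ m)
      (fun u : ℝ => ((-u).exp : ℂ) * (u : ℂ) ^ (s + m - 1)) (Ioi 0) := by
  intro u hu
  have hu0 : (u : ℂ) ≠ 0 := ofReal_ne_zero.mpr (ne_of_gt hu)
  dsimp only
  rw [add_sub_right_comm, cpow_add _ _ hu0, cpow_natCast, ofReal_exp, ofReal_neg, mul_assoc]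

lemma integrableOn_exp_neg_mul_cpow_mul_pow {s : ℂ} (hs : 0 < s.re) (m : ℕ) :
    IntegrableOn (fun u : ℝ => exp (-(u : ℂ)) * (u : ℂ) ^ (s - 1) * (u : ℂ) ^ m) (Ioi 0) := by
  have hsm : 0 < (s + m).re := by simpa using add_pos_of_pos_of_nonneg hs (Nat.cast_nonneg m)
  exact (GammaIntegral_convergent hsm).congr_fun
    (exp_neg_mul_cpow_mul_pow_eqOn s m).symm measurableSet_Ioi

lemma integral_exp_neg_mul_cpow_mul_pow {s : ℂ} (hs : 0 < s.re) (m : ℕ) :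
    ∫ u in Ioi (0 : ℝ), exp (-(u : ℂ)) * (u : ℂ) ^ (s - 1) * (u : ℂ) ^ m
      = poch s m * Gamma s := by
  have hsm : 0 < (s + m).re := by simpa using add_pos_of_pos_of_nonneg hs (Nat.cast_nonneg m)
  rw [setIntegral_congr_fun measurableSet_Ioi (exp_neg_mul_cpow_mul_pow_eqOn s m),
    ← Gamma_add_nat_eq_poch_mul hs, Gamma_eq_integral hsm, GammaIntegral]

lemma integral_exp_neg_mul_cpow_mul_sum_pow {s : ℂ} (hs : 0 < s.re) (S : Finset ℕ)
    (f : ℕ → ℂ) :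
    ∫ u in Ioi (0 : ℝ), exp (-(u : ℂ)) * (u : ℂ) ^ (s - 1) * ∑ m ∈ S, f m * (u : ℂ) ^ m
      = Gamma s * ∑ m ∈ S, poch s m * f m := by
  have hterm : ∀ u : ℝ, exp (-(u : ℂ)) * (u : ℂ) ^ (s - 1) * ∑ m ∈ S, f m * (u : ℂ) ^ m
      = ∑ m ∈ S, f m * (exp (-(u : ℂ)) * (u : ℂ) ^ (s - 1) * (u : ℂ) ^ m) := fun u => by
    rw [mul_sum]
    exact sum_congr rfl fun m _ => by ring
  simp_rw [hterm]
  rw [integral_finsetSum _ fun m _ => (integrableOn_exp_neg_mul_cpow_mul_pow hs m).const_mul _,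
    mul_sum]
  refine sum_congr rfl fun m _ => ?_
  rw [integral_const_mul, integral_exp_neg_mul_cpow_mul_pow hs]
  ring

end Complex

theorem integral_representation_laplace_b1_general (a b₁ b₂ c₁ c₂ x y : ℂ) (k₁ k₂ : ℕ)
    (t₁ t₂ : ℕ) (hb₁ : 0 < b₁.re)
    (K : ℂ → ℂ → ℂ)
    (hK : ∀ X Y : ℂ, K X Y =
      ∑ m ∈ Finset.range (t₁ + 1), ∑ n ∈ Finset.range (t₂ + 1),
        poch a (m + n) * poch b₂ n * (-1 : ℂ) ^ (m * k₁) * poch (-(t₁ : ℂ)) (m * k₁)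
          * (-1 : ℂ) ^ (n * k₂) * poch (-(t₂ : ℂ)) (n * k₂) * X ^ m * Y ^ n
        / (poch c₁ m * poch c₂ n * (Nat.factorial m : ℂ) * (Nat.factorial n : ℂ))) :
    F2one a b₁ b₂ c₁ c₂ t₁ t₂ k₁ k₂ x y =
      (1 / Complex.Gamma b₁) *
        ∫ u in Set.Ioi (0 : ℝ),
          Complex.exp (-(u : ℂ)) * (u : ℂ) ^ (b₁ - 1) * K ((u : ℂ) * x) y := by
  set A : ℕ → ℂ := fun m => ∑ n ∈ range (t₂ + 1),
    poch a (m + n) * poch b₂ n * (-1 : ℂ) ^ (m * k₁) * poch (-(t₁ : ℂ)) (m * k₁)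
      * (-1 : ℂ) ^ (n * k₂) * poch (-(t₂ : ℂ)) (n * k₂) * x ^ m * y ^ n
      / (poch c₁ m * poch c₂ n * (Nat.factorial m : ℂ) * (Nat.factorial n : ℂ))
  have hK_poly : ∀ u : ℂ, K (u * x) y = ∑ m ∈ range (t₁ + 1), A m * u ^ m := fun u => by
    simp only [hK, A, sum_mul, mul_pow]
    exact sum_congr rfl fun m _ => sum_congr rfl fun n _ => by ring
  have hF : F2one a b₁ b₂ c₁ c₂ t₁ t₂ k₁ k₂ x y = ∑ m ∈ range (t₁ + 1), poch b₁ m * A m := by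
    simp only [F2one, A, mul_sum]
    exact sum_congr rfl fun m _ => sum_congr rfl fun n _ => by ring
  simp_rw [hK_poly]
  rw [integral_exp_neg_mul_cpow_mul_sum_pow hb₁, hF, one_div,
    inv_mul_cancel_left₀ (Gamma_ne_zero_of_re_pos hb₁)]

/-- Laplace-type integral representation of `𝓕₂⁽¹⁾` with respect to the parameter `b₁`. -/
theorem integral_representation_laplace_b1 (a b₁ b₂ c₁ c₂ x y : ℂ) (k₁ k₂ : ℕ)
    (hk₁ : 0 < k₁) (hk₂ : 0 < k₂)
    (hc₁ : ∀ n : ℕ, c₁ ≠ -(n : ℂ)) (hc₂ : ∀ n : ℕ, c₂ ≠ -(n : ℂ))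
    (t₁ t₂ : ℕ) (hb₁ : 0 < b₁.re)
    (K : ℂ → ℂ → ℂ)
    (hK : ∀ X Y : ℂ, K X Y =
      ∑ m ∈ Finset.range (t₁ + 1), ∑ n ∈ Finset.range (t₂ + 1),
        poch a (m + n) * poch b₂ n * (-1 : ℂ) ^ (m * k₁) * poch (-(t₁ : ℂ)) (m * k₁)
          * (-1 : ℂ) ^ (n * k₂) * poch (-(t₂ : ℂ)) (n * k₂) * X ^ m * Y ^ n
        / (poch c₁ m * poch c₂ n * (Nat.factorial m : ℂ) * (Nat.factorial n : ℂ))) :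
    F2one a b₁ b₂ c₁ c₂ t₁ t₂ k₁ k₂ x y =
      (1 / Complex.Gamma b₁) *
        ∫ u in Set.Ioi (0 : ℝ),
          Complex.exp (-(u : ℂ)) * (u : ℂ) ^ (b₁ - 1) * K ((u : ℂ) * x) y :=
  integral_representation_laplace_b1_general a b₁ b₂ c₁ c₂ x y k₁ k₂ t₁ t₂ hb₁ K hK
end

section
/- The function ε ↦ 𝓕₂⁽¹⁾(a, b₁, 1/ε; c₁, c₂; t₁, t₂, k₁, k₂, x, ε·y), defined for ε ∈ ℂ∖{0}, tends to the discrete Humbert function ψ₁⁽¹⁾(a, b₁; c₁, c₂; t₁, t₂, k₁, k₂, x, y) as ε → 0 along ℂ∖{0}. -/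
open Complex Finset

open Filter Topology

/-- The first discrete Humbert function `ψ₁⁽¹⁾(a,b₁;c₁,c₂;t₁,t₂,k₁,k₂,x,y)`, a finite sum. -/
noncomputable def psi1one (a b₁ c₁ c₂ : ℂ) (t₁ t₂ k₁ k₂ : ℕ) (x y : ℂ) : ℂ :=
  ∑ m ∈ Finset.range (t₁ + 1), ∑ n ∈ Finset.range (t₂ + 1),
    poch a (m + n) * poch b₁ m * (-1 : ℂ) ^ (m * k₁) * poch (-(t₁ : ℂ)) (m * k₁)
      * (-1 : ℂ) ^ (n * k₂) * poch (-(t₂ : ℂ)) (n * k₂) * x ^ m * y ^ n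
    / (poch c₁ m * poch c₂ n * (Nat.factorial m : ℂ) * (Nat.factorial n : ℂ))

/-!
Both functions are the same finite double sum, except that the `(m, n)` term of `𝓕₂⁽¹⁾` carries
the factor `(b₂)_n yⁿ` where `ψ₁⁽¹⁾` has `yⁿ`. With `b₂ = 1/ε` and `y` replaced by `ε y` that factor is
`(1/ε)_n (ε y)ⁿ = (1 + 0·ε)(1 + 1·ε)⋯(1 + (n-1)·ε) yⁿ`, a polynomial in `ε` with value `yⁿ` at `0`.
-/

theorem ascPochhammer_eval_inv_mul_pow {K : Type*} [Field K] (n : ℕ) {ε : K} (hε : ε ≠ 0) :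
    (ascPochhammer K n).eval ε⁻¹ * ε ^ n = ∏ i ∈ range n, (1 + i * ε) := by
  induction n with
  | zero => simp
  | succ n ih =>
    have h_factor : (ε⁻¹ + n) * ε = 1 + n * ε := by field_simp
    rw [ascPochhammer_succ_eval, prod_range_succ, ← ih, ← h_factor]
    ring

theorem tendsto_ascPochhammer_eval_inv_mul_pow {𝕜 : Type*} [NormedField 𝕜] (n : ℕ) (y : 𝕜) :
    Tendsto (fun ε : 𝕜 => (ascPochhammer 𝕜 n).eval ε⁻¹ * (ε * y) ^ n) (𝓝[≠] 0) (𝓝 (y ^ n)) := by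
  have h_eq : (fun ε : 𝕜 => (∏ i ∈ range n, (1 + i * ε)) * y ^ n)
      =ᶠ[𝓝[≠] 0] fun ε => (ascPochhammer 𝕜 n).eval ε⁻¹ * (ε * y) ^ n := by
    filter_upwards [self_mem_nhdsWithin] with ε hε
    rw [mul_pow, ← mul_assoc, ascPochhammer_eval_inv_mul_pow n hε]
  have h_cont : Continuous fun ε : 𝕜 => (∏ i ∈ range n, (1 + i * ε)) * y ^ n := by fun_prop
  refine Tendsto.congr' h_eq ?_
  simpa using (h_cont.tendsto 0).mono_left nhdsWithin_le_nhds

noncomputable def psi1oneCoeff (a b₁ c₁ c₂ : ℂ) (t₁ t₂ k₁ k₂ : ℕ) (x : ℂ) (m n : ℕ) : ℂ :=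
  poch a (m + n) * poch b₁ m * (-1 : ℂ) ^ (m * k₁) * poch (-(t₁ : ℂ)) (m * k₁)
    * (-1 : ℂ) ^ (n * k₂) * poch (-(t₂ : ℂ)) (n * k₂) * x ^ m
  / (poch c₁ m * poch c₂ n * (Nat.factorial m : ℂ) * (Nat.factorial n : ℂ))

theorem F2one_eq_sum_psi1oneCoeff (a b₁ b₂ c₁ c₂ : ℂ) (t₁ t₂ k₁ k₂ : ℕ) (x y : ℂ) :
    F2one a b₁ b₂ c₁ c₂ t₁ t₂ k₁ k₂ x y = ∑ m ∈ range (t₁ + 1), ∑ n ∈ range (t₂ + 1),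
      psi1oneCoeff a b₁ c₁ c₂ t₁ t₂ k₁ k₂ x m n * (poch b₂ n * y ^ n) := by
  refine sum_congr rfl fun m _ => sum_congr rfl fun n _ => ?_
  rw [psi1oneCoeff]
  ring

theorem psi1one_eq_sum_psi1oneCoeff (a b₁ c₁ c₂ : ℂ) (t₁ t₂ k₁ k₂ : ℕ) (x y : ℂ) :
    psi1one a b₁ c₁ c₂ t₁ t₂ k₁ k₂ x y = ∑ m ∈ range (t₁ + 1), ∑ n ∈ range (t₂ + 1),
      psi1oneCoeff a b₁ c₁ c₂ t₁ t₂ k₁ k₂ x m n * y ^ n := by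
  refine sum_congr rfl fun m _ => sum_congr rfl fun n _ => ?_
  rw [psi1oneCoeff]
  ring

theorem F2one_tendsto_psi1one_general (a b₁ c₁ c₂ x y : ℂ) (k₁ k₂ : ℕ)
    (t₁ t₂ : ℕ) :
    Tendsto (fun ε : ℂ => F2one a b₁ (1 / ε) c₁ c₂ t₁ t₂ k₁ k₂ x (ε * y))
      (𝓝[≠] (0 : ℂ)) (𝓝 (psi1one a b₁ c₁ c₂ t₁ t₂ k₁ k₂ x y)) := by
  simp only [F2one_eq_sum_psi1oneCoeff, psi1one_eq_sum_psi1oneCoeff, one_div]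
  exact tendsto_finsetSum _ fun m _ => tendsto_finsetSum _ fun n _ =>
    (tendsto_ascPochhammer_eval_inv_mul_pow n y).const_mul _

/-- `𝓕₂⁽¹⁾(a, b₁, 1/ε; c₁, c₂; t₁, t₂, k₁, k₂, x, ε y) → ψ₁⁽¹⁾(a, b₁; c₁, c₂; t₁, t₂, k₁, k₂, x, y)`
as `ε → 0` along `ℂ ∖ {0}`. -/
theorem F2one_tendsto_psi1one (a b₁ c₁ c₂ x y : ℂ) (k₁ k₂ : ℕ)
    (hk₁ : 0 < k₁) (hk₂ : 0 < k₂)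
    (hc₁ : ∀ n : ℕ, c₁ ≠ -(n : ℂ)) (hc₂ : ∀ n : ℕ, c₂ ≠ -(n : ℂ))
    (t₁ t₂ : ℕ) :
    Tendsto (fun ε : ℂ => F2one a b₁ (1 / ε) c₁ c₂ t₁ t₂ k₁ k₂ x (ε * y))
      (𝓝[≠] (0 : ℂ)) (𝓝 (psi1one a b₁ c₁ c₂ t₁ t₂ k₁ k₂ x y)) :=
  F2one_tendsto_psi1one_general a b₁ c₁ c₂ x y k₁ k₂ t₁ t₂
end

section
/- The function ε ↦ 𝓕₂⁽¹⁾(a, 1/ε, 1/ε; c₁, c₂; t₁, t₂, k₁, k₂, ε·x, ε·y), defined for ε ∈ ℂ∖{0}, tends to the discrete Humbert function ψ₂⁽¹⁾(a; c₁, c₂; t₁, t₂, k₁, k₂, x, y) as ε → 0 along ℂ∖{0}. -/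
open Complex Finset

open Filter Topology

/-- The second discrete Humbert function `ψ₂⁽¹⁾(a;c₁,c₂;t₁,t₂,k₁,k₂,x,y)`, a finite sum. -/
noncomputable def psi2one (a c₁ c₂ : ℂ) (t₁ t₂ k₁ k₂ : ℕ) (x y : ℂ) : ℂ :=
  ∑ m ∈ Finset.range (t₁ + 1), ∑ n ∈ Finset.range (t₂ + 1),
    poch a (m + n) * (-1 : ℂ) ^ (m * k₁) * poch (-(t₁ : ℂ)) (m * k₁)
      * (-1 : ℂ) ^ (n * k₂) * poch (-(t₂ : ℂ)) (n * k₂) * x ^ m * y ^ n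
    / (poch c₁ m * poch c₂ n * (Nat.factorial m : ℂ) * (Nat.factorial n : ℂ))

lemma poch_eq_prod (z : ℂ) (m : ℕ) : poch z m = ∏ i ∈ Finset.range m, (z + i) := by
  induction m with
  | zero => simp [poch]
  | succ n ih => rw [poch, ascPochhammer_succ_eval, ← poch, ih, Finset.prod_range_succ]

lemma key (m : ℕ) : Tendsto (fun ε : ℂ => ε ^ m * poch (1 / ε) m) (𝓝[≠] (0 : ℂ)) (𝓝 1) := by
  have h : Tendsto (fun ε : ℂ => ∏ i ∈ Finset.range m, (1 + i * ε)) (𝓝[≠] (0 : ℂ)) (𝓝 1) := by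
    have : ContinuousAt (fun ε : ℂ => ∏ i ∈ Finset.range m, (1 + i * ε)) 0 := by
      fun_prop
    have := this.continuousWithinAt (s := {(0:ℂ)}ᶜ)
    simpa using this.tendsto
  refine h.congr' ?_
  filter_upwards [self_mem_nhdsWithin] with ε hε
  have hε : ε ≠ 0 := hε
  rw [poch_eq_prod, Finset.pow_eq_prod_const, ← Finset.prod_mul_distrib]
  refine Finset.prod_congr rfl fun i _ => ?_
  field_simp

/-- `𝓕₂⁽¹⁾(a, 1/ε, 1/ε; c₁, c₂; t₁, t₂, k₁, k₂, ε x, ε y) → ψ₂⁽¹⁾(a; c₁, c₂; t₁, t₂, k₁, k₂, x, y)`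
as `ε → 0` along `ℂ ∖ {0}`. -/
theorem F2one_tendsto_psi2one (a c₁ c₂ x y : ℂ) (k₁ k₂ : ℕ)
    (hk₁ : 0 < k₁) (hk₂ : 0 < k₂)
    (hc₁ : ∀ n : ℕ, c₁ ≠ -(n : ℂ)) (hc₂ : ∀ n : ℕ, c₂ ≠ -(n : ℂ))
    (t₁ t₂ : ℕ) :
    Tendsto (fun ε : ℂ => F2one a (1 / ε) (1 / ε) c₁ c₂ t₁ t₂ k₁ k₂ (ε * x) (ε * y))
      (𝓝[≠] (0 : ℂ)) (𝓝 (psi2one a c₁ c₂ t₁ t₂ k₁ k₂ x y)) := by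
  unfold F2one psi2one
  refine tendsto_finset_sum _ fun m _ => tendsto_finset_sum _ fun n _ => ?_
  have h := ((key m).mul (key n)).mul
    (tendsto_const_nhds (x := poch a (m + n) * (-1 : ℂ) ^ (m * k₁) * poch (-(t₁ : ℂ)) (m * k₁)
      * (-1 : ℂ) ^ (n * k₂) * poch (-(t₂ : ℂ)) (n * k₂) * x ^ m * y ^ n
    / (poch c₁ m * poch c₂ n * (Nat.factorial m : ℂ) * (Nat.factorial n : ℂ)))
    (f := 𝓝[≠] (0 : ℂ)))
  rw [one_mul, one_mul] at h
  refine h.congr fun ε => ?_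
  rw [mul_pow, mul_pow]
  ring
end

section
/- For every r ∈ ℕ, every real x > 0 and every y ∈ ℂ, the r-th derivative at x of the complex-valued function s ↦ s^{b₁+r−1} · 𝓕₂⁽¹⁾(a,b₁,b₂;c₁,c₂;t₁,t₂,k₁,k₂,s,y) on (0,∞) (complex powers of s via the real logarithm) equals x^{b₁−1} (b₁)_r · 𝓕₂⁽¹⁾(a, b₁ + r, b₂; c₁, c₂; t₁, t₂, k₁, k₂, x, y). -/
open Complex Finset

/-!
After multiplication by `s ^ (b₁ + r - 1)`, `𝓕₂⁽¹⁾` is a finite combination of the powers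
`s ^ (b₁ + r - 1 + m)`, and `r` derivatives turn `s ^ w` into the falling factorial of `w` of
length `r` times `s ^ (w - r)`. For `w = b₁ + r - 1 + m` that falling factorial is `(b₁ + m)_r`,
and `(b₁)_m (b₁ + m)_r = (b₁)_r (b₁ + r)_m` trades `(b₁)_m` for `(b₁ + r)_m` in every term.
-/

lemma poch_mul_poch_add (z : ℂ) (n m : ℕ) : poch z n * poch (z + n) m = poch z (n + m) := by
  simpa [poch, Polynomial.eval_comp] using
    congrArg (Polynomial.eval z) (ascPochhammer_mul (S := ℂ) n m)

lemma descPochhammer_eval_eq_poch (z : ℂ) (n : ℕ) :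
    (descPochhammer ℂ n).eval (z + n - 1) = poch z n := by
  rw [descPochhammer_eval_eq_ascPochhammer, poch]
  congr 1
  ring

lemma hasDerivAt_ofReal_cpow_const_of_pos {x : ℝ} (hx : 0 < x) (w : ℂ) :
    HasDerivAt (fun s : ℝ => (s : ℂ) ^ w) (w * (x : ℂ) ^ (w - 1)) x :=
  (hasStrictDerivAt_cpow_const (ofReal_mem_slitPlane.2 hx)).hasDerivAt.comp_ofReal

lemma iteratedDeriv_sum_mul_ofReal_cpow {ι : Type*} (A : Finset ι) (D w : ι → ℂ) (r : ℕ)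
    {x : ℝ} (hx : 0 < x) :
    iteratedDeriv r (fun s : ℝ => ∑ i ∈ A, D i * (s : ℂ) ^ w i) x =
      ∑ i ∈ A, D i * (descPochhammer ℂ r).eval (w i) * (x : ℂ) ^ (w i - r) := by
  induction r generalizing x with
  | zero => simp
  | succ r ih =>
    have hder : HasDerivAt (fun s : ℝ => ∑ i ∈ A, D i * (descPochhammer ℂ r).eval (w i) *
        (s : ℂ) ^ (w i - r))
        (∑ i ∈ A, D i * (descPochhammer ℂ r).eval (w i) *
          ((w i - r) * (x : ℂ) ^ (w i - r - 1))) x :=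
      HasDerivAt.fun_sum fun i _ => (hasDerivAt_ofReal_cpow_const_of_pos hx _).const_mul _
    have hev : iteratedDeriv r (fun s : ℝ => ∑ i ∈ A, D i * (s : ℂ) ^ w i) =ᶠ[nhds x]
        fun s : ℝ => ∑ i ∈ A, D i * (descPochhammer ℂ r).eval (w i) * (s : ℂ) ^ (w i - r) :=
      Filter.eventually_of_mem (Ioi_mem_nhds hx) fun _ hs => ih hs
    rw [iteratedDeriv_succ, hev.deriv_eq, hder.deriv]
    refine sum_congr rfl fun i _ => ?_
    rw [descPochhammer_succ_eval, Nat.cast_succ, ← sub_sub]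
    ring

noncomputable def F2oneCoeff (a b₁ b₂ c₁ c₂ : ℂ) (t₁ t₂ k₁ k₂ : ℕ) (y : ℂ) (p : ℕ × ℕ) : ℂ :=
  poch a (p.1 + p.2) * poch b₁ p.1 * poch b₂ p.2 * (-1 : ℂ) ^ (p.1 * k₁)
    * poch (-(t₁ : ℂ)) (p.1 * k₁) * (-1 : ℂ) ^ (p.2 * k₂) * poch (-(t₂ : ℂ)) (p.2 * k₂) * y ^ p.2
    / (poch c₁ p.1 * poch c₂ p.2 * (Nat.factorial p.1 : ℂ) * (Nat.factorial p.2 : ℂ))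

section F2oneCoeff

variable (a b₁ b₂ c₁ c₂ : ℂ) (t₁ t₂ k₁ k₂ : ℕ) (y : ℂ)

lemma F2one_eq_sum_coeff (x : ℂ) :
    F2one a b₁ b₂ c₁ c₂ t₁ t₂ k₁ k₂ x y =
      ∑ p ∈ range (t₁ + 1) ×ˢ range (t₂ + 1),
        F2oneCoeff a b₁ b₂ c₁ c₂ t₁ t₂ k₁ k₂ y p * x ^ p.1 := by
  rw [F2one, sum_product]
  refine sum_congr rfl fun m _ => sum_congr rfl fun n _ => ?_
  simp only [F2oneCoeff]
  ring

lemma F2oneCoeff_mul_poch (r : ℕ) (p : ℕ × ℕ) :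
    F2oneCoeff a b₁ b₂ c₁ c₂ t₁ t₂ k₁ k₂ y p * poch (b₁ + p.1) r =
      poch b₁ r * F2oneCoeff a (b₁ + r) b₂ c₁ c₂ t₁ t₂ k₁ k₂ y p := by
  have hpoch : poch b₁ p.1 * poch (b₁ + p.1) r = poch b₁ r * poch (b₁ + r) p.1 := by
    rw [poch_mul_poch_add, poch_mul_poch_add, add_comm]
  simp only [F2oneCoeff, div_mul_eq_mul_div, mul_div_assoc']
  congr 1
  linear_combination (poch a (p.1 + p.2) * poch b₂ p.2 * (-1 : ℂ) ^ (p.1 * k₁)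
      * poch (-(t₁ : ℂ)) (p.1 * k₁) * (-1 : ℂ) ^ (p.2 * k₂) * poch (-(t₂ : ℂ)) (p.2 * k₂)
      * y ^ p.2) * hpoch

end F2oneCoeff

theorem deriv_pow_b1_formula_general (a b₁ b₂ c₁ c₂ : ℂ) (k₁ k₂ : ℕ)
    (t₁ t₂ : ℕ) (r : ℕ) (x : ℝ) (hx : 0 < x) (y : ℂ) :
    iteratedDeriv r
        (fun s : ℝ => (s : ℂ) ^ (b₁ + (r : ℂ) - 1) * F2one a b₁ b₂ c₁ c₂ t₁ t₂ k₁ k₂ (s : ℂ) y)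
        x =
      (x : ℂ) ^ (b₁ - 1) * poch b₁ r * F2one a (b₁ + r) b₂ c₁ c₂ t₁ t₂ k₁ k₂ (x : ℂ) y := by
  set coeff := F2oneCoeff a b₁ b₂ c₁ c₂ t₁ t₂ k₁ k₂ y
  have hseries : (fun s : ℝ => (s : ℂ) ^ (b₁ + (r : ℂ) - 1) * F2one a b₁ b₂ c₁ c₂ t₁ t₂ k₁ k₂ s y)
      =ᶠ[nhds x] fun s : ℝ =>
        ∑ p ∈ range (t₁ + 1) ×ˢ range (t₂ + 1), coeff p * (s : ℂ) ^ (b₁ + (r : ℂ) - 1 + p.1) := by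
    filter_upwards [Ioi_mem_nhds hx] with s hs
    rw [F2one_eq_sum_coeff, mul_sum]
    refine sum_congr rfl fun p _ => ?_
    rw [cpow_add _ _ (ofReal_ne_zero.2 hs.ne'), cpow_natCast]
    ring
  rw [hseries.iteratedDeriv_eq, iteratedDeriv_sum_mul_ofReal_cpow _ _ _ _ hx,
    F2one_eq_sum_coeff, mul_sum]
  refine sum_congr rfl fun p _ => ?_
  rw [show b₁ + (r : ℂ) - 1 + p.1 = b₁ + p.1 + r - 1 by ring, descPochhammer_eval_eq_poch,
    show b₁ + p.1 + r - 1 - r = b₁ - 1 + (p.1 : ℕ) by ring, cpow_add _ _ (ofReal_ne_zero.2 hx.ne'),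
    cpow_natCast]
  linear_combination ((x : ℂ) ^ (b₁ - 1) * (x : ℂ) ^ p.1) *
    F2oneCoeff_mul_poch a b₁ b₂ c₁ c₂ t₁ t₂ k₁ k₂ y r p

/-- The differential formula
`(∂/∂x)^r [x^{b₁+r−1} 𝓕₂⁽¹⁾(a,b₁,b₂;c₁,c₂;t₁,t₂,k₁,k₂,x,y)]
  = x^{b₁−1} (b₁)_r 𝓕₂⁽¹⁾(a, b₁+r, b₂; c₁, c₂; t₁, t₂, k₁, k₂, x, y)` at real `x > 0`,
complex powers of the positive real variable taken via the real logarithm. -/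
theorem deriv_pow_b1_formula (a b₁ b₂ c₁ c₂ : ℂ) (k₁ k₂ : ℕ)
    (hk₁ : 0 < k₁) (hk₂ : 0 < k₂)
    (hc₁ : ∀ n : ℕ, c₁ ≠ -(n : ℂ)) (hc₂ : ∀ n : ℕ, c₂ ≠ -(n : ℂ))
    (t₁ t₂ : ℕ) (r : ℕ) (x : ℝ) (hx : 0 < x) (y : ℂ) :
    iteratedDeriv r
        (fun s : ℝ => (s : ℂ) ^ (b₁ + (r : ℂ) - 1) * F2one a b₁ b₂ c₁ c₂ t₁ t₂ k₁ k₂ (s : ℂ) y)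
        x =
      (x : ℂ) ^ (b₁ - 1) * poch b₁ r * F2one a (b₁ + r) b₂ c₁ c₂ t₁ t₂ k₁ k₂ (x : ℂ) y :=
  deriv_pow_b1_formula_general a b₁ b₂ c₁ c₂ k₁ k₂ t₁ t₂ r x hx y
end

section
/- Assume t₁ ≥ 1 and t₂ ≥ 1. Then for all x, y ∈ ℂ, a · 𝓕₂⁽¹⁾(a + 1, b₁, b₂; c₁, c₂; t₁, t₂, k₁, k₂, x, y) = a · 𝓕₂⁽¹⁾(a, b₁, b₂; c₁, c₂; t₁, t₂, k₁, k₂, x, y) + (t₁/k₁) · (𝓕₂⁽¹⁾(a, b₁, b₂; c₁, c₂; t₁, t₂, k₁, k₂, x, y) − 𝓕₂⁽¹⁾(a, b₁, b₂; c₁, c₂; t₁ − 1, t₂, k₁, k₂, x, y)) + (t₂/k₂) · (𝓕₂⁽¹⁾(a, b₁, b₂; c₁, c₂; t₁, t₂, k₁, k₂, x, y) − 𝓕₂⁽¹⁾(a, b₁, b₂; c₁, c₂; t₁, t₂ − 1, k₁, k₂, x, y)). (This is the contiguous relation a𝓕₂⁽¹⁾(a+1) = (a + (1/k₁)Θ_{t₁}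 + (1/k₂)Θ_{t₂})𝓕₂⁽¹⁾, where Θ_t f(t) = t(f(t) − f(t−1)).) -/
open Complex Finset

/-- The general summand of `F2one`. -/
noncomputable def trm (a b₁ b₂ c₁ c₂ : ℂ) (t₁ t₂ k₁ k₂ m n : ℕ) (x y : ℂ) : ℂ :=
  poch a (m + n) * poch b₁ m * poch b₂ n * (-1 : ℂ) ^ (m * k₁) * poch (-(t₁ : ℂ)) (m * k₁)
      * (-1 : ℂ) ^ (n * k₂) * poch (-(t₂ : ℂ)) (n * k₂) * x ^ m * y ^ n
    / (poch c₁ m * poch c₂ n * (Nat.factorial m : ℂ) * (Nat.factorial n : ℂ))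

lemma F2one_eq (a b₁ b₂ c₁ c₂ : ℂ) (t₁ t₂ k₁ k₂ : ℕ) (x y : ℂ) :
    F2one a b₁ b₂ c₁ c₂ t₁ t₂ k₁ k₂ x y =
      ∑ m ∈ Finset.range (t₁ + 1), ∑ n ∈ Finset.range (t₂ + 1),
        trm a b₁ b₂ c₁ c₂ t₁ t₂ k₁ k₂ m n x y := rfl

lemma poch_prod (z : ℂ) (j : ℕ) : poch z j = ∏ i ∈ Finset.range j, (z + i) := by
  induction j with
  | zero => simp [poch]
  | succ j ih => rw [poch_succ, ih, Finset.prod_range_succ]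

lemma poch_neg_nat (N j : ℕ) (h : N < j) : poch (-(N : ℂ)) j = 0 := by
  rw [poch_prod]
  exact Finset.prod_eq_zero (Finset.mem_range.2 h) (by simp)

/-- `z (( -z )_j − ( -(z-1) )_j) = j ( -z )_j`. -/
lemma poch_theta (z : ℂ) (j : ℕ) :
    z * (poch (-z) j - poch (-(z - 1)) j) = (j : ℂ) * poch (-z) j := by
  cases j with
  | zero => simp [poch]
  | succ j =>
    have h1 : poch (-z) (j + 1) = -z * poch (-(z - 1)) j := by
      rw [poch_succ_left]
      ring_nf
    have h2 : poch (-(z - 1)) (j + 1) = poch (-(z - 1)) j * (-(z - 1) + j) :=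
      poch_succ _ _
    rw [h1, h2]
    push_cast
    ring

lemma a_poch (a : ℂ) (s : ℕ) : a * poch (a + 1) s = poch a s * (a + s) := by
  rw [← poch_succ_left, poch_succ]

/-- The contiguous relation `a 𝓕₂⁽¹⁾(a+1) = (a + (1/k₁)Θ_{t₁} + (1/k₂)Θ_{t₂}) 𝓕₂⁽¹⁾`,
where `Θ_t f(t) = t (f(t) − f(t−1))`, for `t₁ ≥ 1`, `t₂ ≥ 1`. -/
theorem contiguous_relation_a_up_difference (a b₁ b₂ c₁ c₂ : ℂ) (k₁ k₂ : ℕ)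
    (hk₁ : 0 < k₁) (hk₂ : 0 < k₂)
    (hc₁ : ∀ n : ℕ, c₁ ≠ -(n : ℂ)) (hc₂ : ∀ n : ℕ, c₂ ≠ -(n : ℂ))
    (t₁ t₂ : ℕ) (ht₁ : 1 ≤ t₁) (ht₂ : 1 ≤ t₂) (x y : ℂ) :
    a * F2one (a + 1) b₁ b₂ c₁ c₂ t₁ t₂ k₁ k₂ x y =
      a * F2one a b₁ b₂ c₁ c₂ t₁ t₂ k₁ k₂ x y +
        (t₁ : ℂ) / (k₁ : ℂ) *
          (F2one a b₁ b₂ c₁ c₂ t₁ t₂ k₁ k₂ x y -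
            F2one a b₁ b₂ c₁ c₂ (t₁ - 1) t₂ k₁ k₂ x y) +
        (t₂ : ℂ) / (k₂ : ℂ) *
          (F2one a b₁ b₂ c₁ c₂ t₁ t₂ k₁ k₂ x y -
            F2one a b₁ b₂ c₁ c₂ t₁ (t₂ - 1) k₁ k₂ x y) := by
  have hk₁' : (k₁ : ℂ) ≠ 0 := Nat.cast_ne_zero.2 hk₁.ne'
  have hk₂' : (k₂ : ℂ) ≠ 0 := Nat.cast_ne_zero.2 hk₂.ne'
  have hc₁' : ((t₁ - 1 : ℕ) : ℂ) = (t₁ : ℂ) - 1 := by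
    push_cast [Nat.cast_sub ht₁]; ring
  have hc₂' : ((t₂ - 1 : ℕ) : ℂ) = (t₂ : ℂ) - 1 := by
    push_cast [Nat.cast_sub ht₂]; ring
  -- extend the deficient sums to the full range
  have hE₁ : F2one a b₁ b₂ c₁ c₂ (t₁ - 1) t₂ k₁ k₂ x y =
      ∑ m ∈ Finset.range (t₁ + 1), ∑ n ∈ Finset.range (t₂ + 1),
        trm a b₁ b₂ c₁ c₂ (t₁ - 1) t₂ k₁ k₂ m n x y := by
    rw [F2one_eq]
    have ht : t₁ - 1 + 1 = t₁ := Nat.succ_pred_eq_of_pos ht₁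
    rw [ht, Finset.sum_range_succ (n := t₁)]
    have hz : ∀ n, trm a b₁ b₂ c₁ c₂ (t₁ - 1) t₂ k₁ k₂ t₁ n x y = 0 := by
      intro n
      have : poch (-((t₁ - 1 : ℕ) : ℂ)) (t₁ * k₁) = 0 :=
        poch_neg_nat _ _ (by have h := Nat.le_mul_of_pos_right t₁ hk₁; omega)
      simp [trm, this]
    simp [hz]
  have hE₂ : F2one a b₁ b₂ c₁ c₂ t₁ (t₂ - 1) k₁ k₂ x y =
      ∑ m ∈ Finset.range (t₁ + 1), ∑ n ∈ Finset.range (t₂ + 1),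
        trm a b₁ b₂ c₁ c₂ t₁ (t₂ - 1) k₁ k₂ m n x y := by
    rw [F2one_eq]
    have ht : t₂ - 1 + 1 = t₂ := Nat.succ_pred_eq_of_pos ht₂
    refine Finset.sum_congr rfl fun m _ => ?_
    rw [ht, Finset.sum_range_succ (n := t₂)]
    have hz : trm a b₁ b₂ c₁ c₂ t₁ (t₂ - 1) k₁ k₂ m t₂ x y = 0 := by
      have : poch (-((t₂ - 1 : ℕ) : ℂ)) (t₂ * k₂) = 0 :=
        poch_neg_nat _ _ (by have h := Nat.le_mul_of_pos_right t₂ hk₂; omega)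
      simp [trm, this]
    simp [hz]
  rw [F2one_eq, F2one_eq, hE₁, hE₂]
  -- termwise identity
  have key : ∀ m n : ℕ,
      a * trm (a + 1) b₁ b₂ c₁ c₂ t₁ t₂ k₁ k₂ m n x y =
        a * trm a b₁ b₂ c₁ c₂ t₁ t₂ k₁ k₂ m n x y +
          (t₁ : ℂ) / (k₁ : ℂ) *
            (trm a b₁ b₂ c₁ c₂ t₁ t₂ k₁ k₂ m n x y -
              trm a b₁ b₂ c₁ c₂ (t₁ - 1) t₂ k₁ k₂ m n x y) +
          (t₂ : ℂ) / (k₂ : ℂ) *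
            (trm a b₁ b₂ c₁ c₂ t₁ t₂ k₁ k₂ m n x y -
              trm a b₁ b₂ c₁ c₂ t₁ (t₂ - 1) k₁ k₂ m n x y) := by
    intro m n
    have ha : a * poch (a + 1) (m + n) = poch a (m + n) * (a + ((m : ℂ) + n)) := by
      rw [a_poch]; push_cast; ring
    have h₁ : (t₁ : ℂ) / (k₁ : ℂ) *
        (poch (-(t₁ : ℂ)) (m * k₁) - poch (-((t₁ - 1 : ℕ) : ℂ)) (m * k₁)) =
        (m : ℂ) * poch (-(t₁ : ℂ)) (m * k₁) := by
      have h := poch_theta (t₁ : ℂ) (m * k₁)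
      rw [hc₁', div_mul_eq_mul_div, h, Nat.cast_mul]
      field_simp
      try ring
    have h₂ : (t₂ : ℂ) / (k₂ : ℂ) *
        (poch (-(t₂ : ℂ)) (n * k₂) - poch (-((t₂ - 1 : ℕ) : ℂ)) (n * k₂)) =
        (n : ℂ) * poch (-(t₂ : ℂ)) (n * k₂) := by
      have h := poch_theta (t₂ : ℂ) (n * k₂)
      rw [hc₂', div_mul_eq_mul_div, h, Nat.cast_mul]
      field_simp
      try ring
    simp only [trm]
    set D := poch c₁ m * poch c₂ n * (Nat.factorial m : ℂ) * (Nat.factorial n : ℂ)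
    linear_combination
      (poch b₁ m * poch b₂ n * (-1 : ℂ) ^ (m * k₁) * poch (-(t₁ : ℂ)) (m * k₁)
        * (-1 : ℂ) ^ (n * k₂) * poch (-(t₂ : ℂ)) (n * k₂) * x ^ m * y ^ n / D) * ha
      - (poch a (m + n) * poch b₁ m * poch b₂ n * (-1 : ℂ) ^ (m * k₁)
        * (-1 : ℂ) ^ (n * k₂) * poch (-(t₂ : ℂ)) (n * k₂) * x ^ m * y ^ n / D) * h₁
      - (poch a (m + n) * poch b₁ m * poch b₂ n * (-1 : ℂ) ^ (m * k₁)
        * poch (-(t₁ : ℂ)) (m * k₁) * (-1 : ℂ) ^ (n * k₂) * x ^ m * y ^ n / D) * h₂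
  calc a * ∑ m ∈ Finset.range (t₁ + 1), ∑ n ∈ Finset.range (t₂ + 1),
        trm (a + 1) b₁ b₂ c₁ c₂ t₁ t₂ k₁ k₂ m n x y
      = ∑ m ∈ Finset.range (t₁ + 1), ∑ n ∈ Finset.range (t₂ + 1),
        (a * trm a b₁ b₂ c₁ c₂ t₁ t₂ k₁ k₂ m n x y +
          (t₁ : ℂ) / (k₁ : ℂ) *
            (trm a b₁ b₂ c₁ c₂ t₁ t₂ k₁ k₂ m n x y -
              trm a b₁ b₂ c₁ c₂ (t₁ - 1) t₂ k₁ k₂ m n x y) +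
          (t₂ : ℂ) / (k₂ : ℂ) *
            (trm a b₁ b₂ c₁ c₂ t₁ t₂ k₁ k₂ m n x y -
              trm a b₁ b₂ c₁ c₂ t₁ (t₂ - 1) k₁ k₂ m n x y)) := by
        rw [Finset.mul_sum]
        exact Finset.sum_congr rfl fun m _ => by
          rw [Finset.mul_sum]
          exact Finset.sum_congr rfl fun n _ => key m n
    _ = _ := by
        simp only [Finset.sum_add_distrib, Finset.sum_sub_distrib, ← Finset.mul_sum]
end

section
/- Assume 0 < Re b₁, 0 < Re(c₁ − b₁), 0 < Re b₂ and 0 < Re(c₂ − b₂). Define G₂(X,Y) = Σ_{m,n≥0} (a)_{m+n} (−1)^{(m+n)k} (−t)_{(m+n)k} X^m Y^n / (m! n!) (a finite sum). Then 𝓕₂⁽²⁾(a,b₁,b₂;c₁,c₂;t,k,x,y) = [Γ(c₁)Γ(c₂)/(Γ(b₁)Γ(b₂)Γ(c₁−b₁)Γ(c₂−b₂))] · ∫₀¹∫₀¹ u^{b₁−1}(1−u)^{c₁−b₁−1} v^{b₂−1}(1−v)^{c₂−b₂−1} G₂(u·x, v·y) du dv, where the complex powers of u, 1−u, v, 1−v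 are defined via the real logarithm on (0,1). -/
open Complex Finset

/-- The second discrete Appell function `𝓕₂⁽²⁾(a,b₁,b₂;c₁,c₂;t,k,x,y)`.
Since `(−t)_{(m+n)k} = 0` once `(m+n)k > t` (for `k ≥ 1`), the doubly infinite sum
reduces to this finite sum. -/
noncomputable def F2two (a b₁ b₂ c₁ c₂ : ℂ) (t k : ℕ) (x y : ℂ) : ℂ :=
  ∑ m ∈ Finset.range (t + 1), ∑ n ∈ Finset.range (t + 1),
    poch a (m + n) * poch b₁ m * poch b₂ n * (-1 : ℂ) ^ ((m + n) * k)
      * poch (-(t : ℂ)) ((m + n) * k) * x ^ m * y ^ n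
    / (poch c₁ m * poch c₂ n * (Nat.factorial m : ℂ) * (Nat.factorial n : ℂ))

/-!
Since `G₂` is a polynomial, integration commutes with its finite sum, and each term `u^m v^n`
of `G₂(u x, v y)` integrates against the two Euler weights to a product of two Beta integrals.
`B(b + m, c - b) = Γ(b) Γ(c - b) / Γ(c) · (b)_m / (c)_m` turns these into the Pochhammer
quotients of `𝓕₂⁽²⁾`; the Gamma prefactor cancels the remaining constants.
-/

open MeasureTheory

section IntervalIntegral

variable {ι : Type*} {s : Finset ι} {a b c d : ℝ}

theorem intervalIntegral.integral_finset_sum_const_mul {A : ι → ℂ} {f : ι → ℝ → ℂ}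
    (hf : ∀ i ∈ s, IntervalIntegrable (f i) volume a b) :
    ∫ x in a..b, ∑ i ∈ s, A i * f i x = ∑ i ∈ s, A i * ∫ x in a..b, f i x := by
  rw [intervalIntegral.integral_finsetSum fun i hi => (hf i hi).const_mul (A i)]
  simp only [intervalIntegral.integral_const_mul]

theorem intervalIntegral.integral_integral_finset_sum_mul {A : ι → ℂ} {f g : ι → ℝ → ℂ}
    (hf : ∀ i ∈ s, IntervalIntegrable (f i) volume a b)
    (hg : ∀ i ∈ s, IntervalIntegrable (g i) volume c d) :
    ∫ u in a..b, ∫ v in c..d, ∑ i ∈ s, A i * (f i u * g i v) =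
      ∑ i ∈ s, A i * ((∫ u in a..b, f i u) * ∫ v in c..d, g i v) := by
  have inner (u : ℝ) : ∫ v in c..d, ∑ i ∈ s, A i * (f i u * g i v) =
      ∑ i ∈ s, (A i * ∫ v in c..d, g i v) * f i u := by
    simp only [← mul_assoc]
    rw [integral_finset_sum_const_mul hg]
    exact sum_congr rfl fun i _ => by ring
  simp only [inner, integral_finset_sum_const_mul hf]
  exact sum_congr rfl fun i _ => by ring

end IntervalIntegral

theorem poch_eq_Gamma_add_div_Gamma {z : ℂ} (hz : 0 < z.re) (m : ℕ) :
    poch z m = Gamma (z + m) / Gamma z :=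
  (Gamma_add_nat_div_Gamma_eq z fun k hk => by simp [hk] at hz; linarith).symm

noncomputable def eulerWeight (b c : ℂ) (v : ℝ) : ℂ :=
  (v : ℂ) ^ (b - 1) * (1 - (v : ℂ)) ^ (c - b - 1)

section EulerWeight

variable {b c : ℂ}

theorem eulerWeight_mul_pow_eqOn (b c : ℂ) (m : ℕ) :
    Set.EqOn (fun v => eulerWeight b c v * (v : ℂ) ^ m)
      (fun v : ℝ => (v : ℂ) ^ (b + m - 1) * (1 - (v : ℂ)) ^ (c - b - 1)) (Set.Ioc 0 1) := by
  intro v hv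
  have hv0 : (v : ℂ) ≠ 0 := ofReal_ne_zero.mpr hv.1.ne'
  simp only [eulerWeight, add_sub_right_comm b, cpow_add _ _ hv0, cpow_natCast]
  ring

theorem intervalIntegrable_eulerWeight_mul_pow (hb : 0 < b.re) (hcb : 0 < (c - b).re) (m : ℕ) :
    IntervalIntegrable (fun v => eulerWeight b c v * (v : ℂ) ^ m) volume 0 1 := by
  have hbm : 0 < (b + m).re := by simp; positivity
  rw [intervalIntegrable_iff_integrableOn_Ioc_of_le zero_le_one]
  exact ((intervalIntegrable_iff_integrableOn_Ioc_of_le zero_le_one).mp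
    (betaIntegral_convergent hbm hcb)).congr_fun (eulerWeight_mul_pow_eqOn b c m).symm
    measurableSet_Ioc

theorem integral_eulerWeight_mul_pow (hb : 0 < b.re) (hcb : 0 < (c - b).re) (m : ℕ) :
    ∫ v in (0 : ℝ)..1, eulerWeight b c v * (v : ℂ) ^ m =
      Gamma b * Gamma (c - b) / Gamma c * (poch b m / poch c m) := by
  have hbm : 0 < (b + m).re := by simp; positivity
  have hc : 0 < c.re := by simpa using add_pos hb hcb
  have hbeta : ∫ v in (0 : ℝ)..1, eulerWeight b c v * (v : ℂ) ^ m = betaIntegral (b + m) (c - b) :=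
    intervalIntegral.integral_congr_ae (Filter.Eventually.of_forall fun v hv =>
      eulerWeight_mul_pow_eqOn b c m (by rwa [Set.uIoc_of_le zero_le_one] at hv))
  have hGamma := Gamma_mul_Gamma_eq_betaIntegral hbm hcb
  rw [show b + m + (c - b) = c + m by ring] at hGamma
  have := Gamma_ne_zero_of_re_pos hb
  have := Gamma_ne_zero_of_re_pos hc
  have := Gamma_ne_zero_of_re_pos (show 0 < (c + m).re by simp; positivity)
  rw [hbeta, poch_eq_Gamma_add_div_Gamma hb, poch_eq_Gamma_add_div_Gamma hc]
  field_simp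
  linear_combination -hGamma

end EulerWeight

theorem integral_representation_euler_two_general (a b₁ b₂ c₁ c₂ x y : ℂ) (k : ℕ)
    (t : ℕ)
    (hb₁ : 0 < b₁.re) (hc₁b₁ : 0 < (c₁ - b₁).re) (hb₂ : 0 < b₂.re) (hc₂b₂ : 0 < (c₂ - b₂).re)
    (G₂ : ℂ → ℂ → ℂ)
    (hG₂ : ∀ X Y : ℂ, G₂ X Y =
      ∑ m ∈ Finset.range (t + 1), ∑ n ∈ Finset.range (t + 1),
        poch a (m + n) * (-1 : ℂ) ^ ((m + n) * k) * poch (-(t : ℂ)) ((m + n) * k)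
          * X ^ m * Y ^ n / ((Nat.factorial m : ℂ) * (Nat.factorial n : ℂ))) :
    F2two a b₁ b₂ c₁ c₂ t k x y =
      Complex.Gamma c₁ * Complex.Gamma c₂ /
          (Complex.Gamma b₁ * Complex.Gamma b₂ * Complex.Gamma (c₁ - b₁) *
            Complex.Gamma (c₂ - b₂)) *
        ∫ u in (0 : ℝ)..1, ∫ v in (0 : ℝ)..1,
          (u : ℂ) ^ (b₁ - 1) * ((1 : ℂ) - (u : ℂ)) ^ (c₁ - b₁ - 1) *
            (v : ℂ) ^ (b₂ - 1) * ((1 : ℂ) - (v : ℂ)) ^ (c₂ - b₂ - 1) *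
            G₂ ((u : ℂ) * x) ((v : ℂ) * y) := by
  set A : ℕ × ℕ → ℂ := fun p => poch a (p.1 + p.2) * (-1 : ℂ) ^ ((p.1 + p.2) * k) *
    poch (-(t : ℂ)) ((p.1 + p.2) * k) * x ^ p.1 * y ^ p.2 / (p.1.factorial * p.2.factorial)
  have integrand (u v : ℝ) :
      (u : ℂ) ^ (b₁ - 1) * ((1 : ℂ) - (u : ℂ)) ^ (c₁ - b₁ - 1) *
        (v : ℂ) ^ (b₂ - 1) * ((1 : ℂ) - (v : ℂ)) ^ (c₂ - b₂ - 1) * G₂ ((u : ℂ) * x) ((v : ℂ) * y) =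
      ∑ p ∈ range (t + 1) ×ˢ range (t + 1),
        A p * ((eulerWeight b₁ c₁ u * (u : ℂ) ^ p.1) * (eulerWeight b₂ c₂ v * (v : ℂ) ^ p.2)) := by
    rw [hG₂, sum_product, mul_sum]
    refine sum_congr rfl fun m _ => ?_
    rw [mul_sum]
    exact sum_congr rfl fun n _ => by simp only [A, eulerWeight]; ring
  have integral : ∫ u in (0 : ℝ)..1, ∫ v in (0 : ℝ)..1, ∑ p ∈ range (t + 1) ×ˢ range (t + 1),
        A p * ((eulerWeight b₁ c₁ u * (u : ℂ) ^ p.1) * (eulerWeight b₂ c₂ v * (v : ℂ) ^ p.2)) =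
      Gamma b₁ * Gamma (c₁ - b₁) / Gamma c₁ * (Gamma b₂ * Gamma (c₂ - b₂) / Gamma c₂) *
        ∑ p ∈ range (t + 1) ×ˢ range (t + 1),
          A p * (poch b₁ p.1 / poch c₁ p.1 * (poch b₂ p.2 / poch c₂ p.2)) := by
    rw [intervalIntegral.integral_integral_finset_sum_mul
      (fun p _ => intervalIntegrable_eulerWeight_mul_pow hb₁ hc₁b₁ p.1)
      (fun p _ => intervalIntegrable_eulerWeight_mul_pow hb₂ hc₂b₂ p.2)]
    simp only [integral_eulerWeight_mul_pow hb₁ hc₁b₁, integral_eulerWeight_mul_pow hb₂ hc₂b₂,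
      mul_sum]
    exact sum_congr rfl fun p _ => by ring
  have normalization : Gamma c₁ * Gamma c₂ /
      (Gamma b₁ * Gamma b₂ * Gamma (c₁ - b₁) * Gamma (c₂ - b₂)) *
      (Gamma b₁ * Gamma (c₁ - b₁) / Gamma c₁ * (Gamma b₂ * Gamma (c₂ - b₂) / Gamma c₂)) = 1 := by
    field_simp [Gamma_ne_zero_of_re_pos hb₁, Gamma_ne_zero_of_re_pos hb₂,
      Gamma_ne_zero_of_re_pos hc₁b₁, Gamma_ne_zero_of_re_pos hc₂b₂,
      Gamma_ne_zero_of_re_pos (by simpa using add_pos hb₁ hc₁b₁ : 0 < c₁.re),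
      Gamma_ne_zero_of_re_pos (by simpa using add_pos hb₂ hc₂b₂ : 0 < c₂.re)]
  simp only [integrand]
  rw [integral, ← mul_assoc, normalization, one_mul, F2two, sum_product]
  exact sum_congr rfl fun m _ => sum_congr rfl fun n _ => by simp only [A]; ring

/-- Euler-type double integral representation of `𝓕₂⁽²⁾`. -/
theorem integral_representation_euler_two (a b₁ b₂ c₁ c₂ x y : ℂ) (k : ℕ) (hk : 0 < k)
    (hc₁ : ∀ n : ℕ, c₁ ≠ -(n : ℂ)) (hc₂ : ∀ n : ℕ, c₂ ≠ -(n : ℂ))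
    (t : ℕ)
    (hb₁ : 0 < b₁.re) (hc₁b₁ : 0 < (c₁ - b₁).re) (hb₂ : 0 < b₂.re) (hc₂b₂ : 0 < (c₂ - b₂).re)
    (G₂ : ℂ → ℂ → ℂ)
    (hG₂ : ∀ X Y : ℂ, G₂ X Y =
      ∑ m ∈ Finset.range (t + 1), ∑ n ∈ Finset.range (t + 1),
        poch a (m + n) * (-1 : ℂ) ^ ((m + n) * k) * poch (-(t : ℂ)) ((m + n) * k)
          * X ^ m * Y ^ n / ((Nat.factorial m : ℂ) * (Nat.factorial n : ℂ))) :
    F2two a b₁ b₂ c₁ c₂ t k x y =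
      Complex.Gamma c₁ * Complex.Gamma c₂ /
          (Complex.Gamma b₁ * Complex.Gamma b₂ * Complex.Gamma (c₁ - b₁) *
            Complex.Gamma (c₂ - b₂)) *
        ∫ u in (0 : ℝ)..1, ∫ v in (0 : ℝ)..1,
          (u : ℂ) ^ (b₁ - 1) * ((1 : ℂ) - (u : ℂ)) ^ (c₁ - b₁ - 1) *
            (v : ℂ) ^ (b₂ - 1) * ((1 : ℂ) - (v : ℂ)) ^ (c₂ - b₂ - 1) *
            G₂ ((u : ℂ) * x) ((v : ℂ) * y) :=
  integral_representation_euler_two_general a b₁ b₂ c₁ c₂ x y k t hb₁ hc₁b₁ hb₂ hc₂b₂ G₂ hG₂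
end

section
/- For every z ∈ ℂ with |z| < 1 and all x, y ∈ ℂ, the series Σ_{r=0}^{∞} ((a)_r / r!) z^r · 𝓕₂⁽²⁾(a + r, b₁, b₂; c₁, c₂; t, k, x, y) converges and equals (1 − z)^{−a} · 𝓕₂⁽²⁾(a, b₁, b₂; c₁, c₂; t, k, x/(1−z), y/(1−z)), where (1 − z)^{−a} is the principal complex power. -/
/-!
Since `(a)_r (a + r)_j = (a)_{r + j} = (a)_j (a + j)_r`, the `(m, n)` term of
`Σ_r (a)_r/r! z^r 𝓕₂⁽²⁾(a + r, …)` is `(a)_{m+n}` times the binomial series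
`Σ_r (a + m + n)_r/r! z^r = (1 - z)^{-(a + m + n)}`, and the factor `(1 - z)^{-(m + n)}` is
absorbed into `x^m y^n`. As `𝓕₂⁽²⁾` is a finite sum, the series may be summed term by
term.
-/

open Complex Finset

open scoped Nat

theorem poch_add_s19 (b : ℂ) (r s : ℕ) : poch b (r + s) = poch b r * poch (b + r) s := by
  simp [poch, ← ascPochhammer_mul, Polynomial.eval_comp]

theorem poch_eq_factorial_mul_choose (b : ℂ) (r : ℕ) :
    poch b r = r ! * Ring.choose (b + r - 1) r := by
  rw [poch, ← Polynomial.ascPochhammer_smeval_eq_eval,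
    ← Ring.factorial_nsmul_multichoose_eq_ascPochhammer, Ring.multichoose_eq, nsmul_eq_mul]

theorem hasSum_poch_div_factorial_mul_pow (b : ℂ) {z : ℂ} (hz : ‖z‖ < 1) :
    HasSum (fun r : ℕ => poch b r / r ! * z ^ r) ((1 - z) ^ (-b)) := by
  have hz' : z ∈ Metric.eball (0 : ℂ) 1 := by
    simpa [← ofReal_norm, enorm_eq_nnnorm] using hz
  have h := (one_div_one_sub_cpow_hasFPowerSeriesOnBall_zero b).hasSum hz'
  simp only [FormalMultilinearSeries.ofScalars_apply_eq, zero_add, smul_eq_mul] at h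
  have hcoeff (r : ℕ) : poch b r / r ! = Ring.choose (b + r - 1) r := by
    rw [poch_eq_factorial_mul_choose,
      mul_div_cancel_left₀ _ (by exact_mod_cast r.factorial_ne_zero)]
  simp only [hcoeff, cpow_neg, ← one_div]
  exact h

theorem hasSum_poch_div_factorial_mul_pow_mul_poch_add (a : ℂ) (j : ℕ) {z : ℂ}
    (hz : ‖z‖ < 1) :
    HasSum (fun r : ℕ => poch a r / r ! * z ^ r * poch (a + r) j)
      ((1 - z) ^ (-a) * (poch a j / (1 - z) ^ j)) := by
  have hz1 : (1 : ℂ) - z ≠ 0 := by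
    rintro h
    simp [← eq_of_sub_eq_zero h] at hz
  have hterm (r : ℕ) : poch a r / r ! * z ^ r * poch (a + r) j
      = poch a j * (poch (a + j) r / r ! * z ^ r) := by
    have := (poch_add_s19 a r j).symm.trans (add_comm r j ▸ poch_add_s19 a j r)
    linear_combination (z ^ r / r !) * this
  have hsum : (1 - z) ^ (-a) * (poch a j / (1 - z) ^ j) = poch a j * (1 - z) ^ (-(a + j)) := by
    rw [neg_add, cpow_add _ _ hz1, cpow_neg _ (j : ℂ), cpow_natCast]
    ring
  simp only [hterm, hsum]
  exact (hasSum_poch_div_factorial_mul_pow (a + j) hz).mul_left (poch a j)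

theorem infinite_summation_formula_two_general (a b₁ b₂ c₁ c₂ : ℂ) (k : ℕ)
    (t : ℕ) (z : ℂ) (hz : ‖z‖ < 1) (x y : ℂ) :
    HasSum
      (fun r : ℕ =>
        poch a r / (Nat.factorial r : ℂ) * z ^ r * F2two (a + r) b₁ b₂ c₁ c₂ t k x y)
      ((1 - z) ^ (-a) * F2two a b₁ b₂ c₁ c₂ t k (x / (1 - z)) (y / (1 - z))) := by
  simp only [F2two, mul_sum]
  refine hasSum_sum fun m _ => hasSum_sum fun n _ => ?_
  convert (hasSum_poch_div_factorial_mul_pow_mul_poch_add a (m + n) hz).mul_right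
    (poch b₁ m * poch b₂ n * (-1 : ℂ) ^ ((m + n) * k) * poch (-(t : ℂ)) ((m + n) * k)
      * x ^ m * y ^ n / (poch c₁ m * poch c₂ n * m ! * n !)) using 1
  · rfl -- `HasSum.mul_right` reaches `AddCommMonoid ℂ` through a different (defeq) instance path
  · funext r
    ring
  · rw [div_pow, div_pow, pow_add]
    ring

/-- The infinite summation formula for `𝓕₂⁽²⁾`:
`Σ_{r≥0} ((a)_r/r!) z^r 𝓕₂⁽²⁾(a+r, b₁, b₂; c₁, c₂; t, k, x, y)` converges, with sum
`(1−z)^{−a} 𝓕₂⁽²⁾(a, b₁, b₂; c₁, c₂; t, k, x/(1−z), y/(1−z))`, for `|z| < 1`. -/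
theorem infinite_summation_formula_two (a b₁ b₂ c₁ c₂ : ℂ) (k : ℕ) (hk : 0 < k)
    (hc₁ : ∀ n : ℕ, c₁ ≠ -(n : ℂ)) (hc₂ : ∀ n : ℕ, c₂ ≠ -(n : ℂ))
    (t : ℕ) (z : ℂ) (hz : ‖z‖ < 1) (x y : ℂ) :
    HasSum
      (fun r : ℕ =>
        poch a r / (Nat.factorial r : ℂ) * z ^ r * F2two (a + r) b₁ b₂ c₁ c₂ t k x y)
      ((1 - z) ^ (-a) * F2two a b₁ b₂ c₁ c₂ t k (x / (1 - z)) (y / (1 - z))) :=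
  infinite_summation_formula_two_general a b₁ b₂ c₁ c₂ k t z hz x y
end
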